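/- arXiv:2010.10417 — 7 statements merged into one kernel-verified Lean document; each statement's English description precedes it below -/
import Mathlib

section
/- There exist a finite group G of order 32 and two characters χ and θ of G such that both (G, χ) and (G, θ) are sharp of type L = {−1, 3}, while ⟨χ, χ⟩_G = 6 and ⟨θ, θ⟩_G = 4. In particular, for an L-sharp pair with |L| ≥ 2 the inner product ⟨χ, χ⟩_G is not uniquely determined by L (this provides a counterexample to the 1988 conjecture of Cameron and Kiyota). -/
set_option maxRecDepth 40000


open CategoryTheory

/-- The inner product of two class functions: `(1/|G|) ∑_{g∈G} α(g)·conj(β(g))`. -/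
noncomputable def charInner (G : Type) [Group G] [Fintype G] (α β : G → ℂ) : ℂ :=
  (Fintype.card G : ℂ)⁻¹ * ∑ g : G, α g * (starRingEnd ℂ) (β g)

/-- `χ` is the character of some finite-dimensional complex representation of `G`. -/
def IsChar (G : Type) [Group G] (χ : G → ℂ) : Prop :=
  ∃ V : FDRep ℂ G, ∀ g, χ g = V.character g

/-- `χ` is a virtual (generalized) character: a difference of two characters. -/
def IsVirtualChar (G : Type) [Group G] (χ : G → ℂ) : Prop :=
  ∃ V W : FDRep ℂ G, ∀ g, χ g = V.character g - W.character g

/-- The pair `(G, χ)` is sharp of type `L`: `L = {χ(g) : g ≠ 1}` (as a set of distinct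
values) and `∏_{l ∈ L} (χ(1) − l) = |G|`. -/
def IsSharp (G : Type) [Group G] [Fintype G] (χ : G → ℂ) (L : Finset ℂ) : Prop :=
  (↑L = {z : ℂ | ∃ g : G, g ≠ 1 ∧ χ g = z}) ∧
  ∏ l ∈ L, (χ 1 - l) = (Fintype.card G : ℂ)

/-- The pair `(G, χ)` is normalized: `⟨χ, 1_G⟩ = 0`. -/
def IsNormalized (G : Type) [Group G] [Fintype G] (χ : G → ℂ) : Prop :=
  charInner G χ (fun _ => 1) = 0


open Finset LinearMap

variable {G : Type} [Group G] {Y X : Type} [Fintype Y] [DecidableEq Y]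
    [Fintype X] [DecidableEq X]

/-- permutation representation on functions -/
def permRep (φ : G →* Equiv.Perm Y) : Representation ℂ G (Y → ℂ) where
  toFun g := LinearMap.funLeft ℂ ℂ (φ g⁻¹)
  map_one' := by
    ext v y
    simp
  map_mul' g h := by
    ext v y
    simp [mul_inv_rev]

lemma permRep_apply (φ : G →* Equiv.Perm Y) (g : G) (v : Y → ℂ) (y : Y) :
    permRep φ g v y = v (φ g⁻¹ y) := rfl

lemma trace_permRep (φ : G →* Equiv.Perm Y) (g : G) :
    LinearMap.trace ℂ (Y → ℂ) (permRep φ g)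
      = ((Finset.univ.filter fun y : Y => φ g y = y).card : ℂ) := by
  classical
  rw [LinearMap.trace_eq_matrix_trace ℂ (Pi.basisFun ℂ Y)]
  have : ∀ y : Y, LinearMap.toMatrix (Pi.basisFun ℂ Y) (Pi.basisFun ℂ Y) (permRep φ g) y y
      = if φ g y = y then 1 else 0 := by
    intro y
    rw [LinearMap.toMatrix_apply]
    simp only [Pi.basisFun_apply, Pi.basisFun_repr, permRep_apply]
    rw [Pi.single_apply]
    congr 1
    simp only [eq_iff_iff, map_inv]
    exact (Equiv.Perm.inv_eq_iff_eq).trans eq_comm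
  rw [Matrix.trace]
  simp only [Matrix.diag]
  rw [Finset.sum_congr rfl (fun y _ => this y)]
  rw [Finset.sum_boole]

/-- pushforward along `p` -/
noncomputable def pushLin (p : Y → X) : (Y → ℂ) →ₗ[ℂ] (X → ℂ) where
  toFun v := fun x => ∑ y ∈ Finset.univ.filter (fun y => p y = x), v y
  map_add' u v := by ext x; simp [Finset.sum_add_distrib]
  map_smul' c v := by ext x; simp [Finset.mul_sum]

lemma pushLin_apply (p : Y → X) (v : Y → ℂ) (x : X) :
    pushLin p v x = ∑ y ∈ Finset.univ.filter (fun y => p y = x), v y := rfl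

lemma char_fix_sub (φY : G →* Equiv.Perm Y) (φX : G →* Equiv.Perm X) (p : Y → X)
    (hs : Function.Surjective p) (he : ∀ (g : G) (y : Y), p (φY g y) = φX g (p y)) :
    ∃ V : FDRep ℂ G, ∀ g : G,
      V.character g = ((Finset.univ.filter fun y : Y => φY g y = y).card : ℂ)
        - ((Finset.univ.filter fun x : X => φX g x = x).card : ℂ) := by
  classical
  set ρ := permRep φY with hρ
  set ρX := permRep φX with hρX
  set push := pushLin (Y := Y) p with hpush
  -- intertwining
  have key : ∀ (g : G) (v : Y → ℂ) (x : X), push (ρ g v) x = push v (φX g⁻¹ x) := by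
    intro g v x
    rw [pushLin_apply, pushLin_apply]
    refine Finset.sum_nbij' (fun y => φY g⁻¹ y) (fun y => φY g y) ?_ ?_ ?_ ?_ ?_
    · intro y hy
      simp only [Finset.mem_filter, Finset.mem_univ, true_and] at hy ⊢
      rw [he g⁻¹ y, hy]
    · intro y hy
      simp only [Finset.mem_filter, Finset.mem_univ, true_and] at hy ⊢
      rw [he g y, hy]
      simp
    · intro y _; simp
    · intro y _; simp
    · intro y _
      rw [permRep_apply]
  have keyc : ∀ (g : G) (x : X),
      (Finset.univ.filter (fun y => p y = φX g⁻¹ x)).card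
        = (Finset.univ.filter (fun y => p y = x)).card := by
    intro g x
    apply Finset.card_nbij' (fun y => φY g y) (fun y => φY g⁻¹ y)
    · intro y hy
      simp only [Finset.mem_coe, Finset.mem_filter, Finset.mem_univ, true_and] at hy ⊢
      rw [he g y, hy]
      simp
    · intro y hy
      simp only [Finset.mem_coe, Finset.mem_filter, Finset.mem_univ, true_and] at hy ⊢
      rw [he g⁻¹ y, hy]
    · intro y _; simp
    · intro y _; simp
  -- fibers nonempty
  have hc : ∀ x : X, ((Finset.univ.filter (fun y => p y = x)).card : ℂ) ≠ 0 := by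
    intro x
    obtain ⟨y, hy⟩ := hs x
    have hne : (Finset.univ.filter (fun y => p y = x)).Nonempty := ⟨y, by simp [hy]⟩
    exact Nat.cast_ne_zero.mpr (Finset.card_pos.mpr hne).ne'
  -- the invariant subspace
  set W := LinearMap.ker push with hWdef
  have hmaps : ∀ g : G, ∀ w ∈ W, ρ g w ∈ W := by
    intro g w hw
    rw [LinearMap.mem_ker] at hw ⊢
    ext x
    rw [key g w x, hw]
    rfl
  let σ : Representation ℂ G W :=
  { toFun := fun g => (ρ g).restrict (fun w hw => hmaps g w hw)
    map_one' := by
      apply LinearMap.ext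
      intro w
      apply Subtype.ext
      simp [LinearMap.restrict_apply]
    map_mul' := fun g h => by
      apply LinearMap.ext
      intro w
      apply Subtype.ext
      simp [LinearMap.restrict_apply] }
  refine ⟨FDRep.of σ, fun g => ?_⟩
  have hchar : (FDRep.of σ).character g = LinearMap.trace ℂ W (σ g) := rfl
  -- auxiliary maps
  let pull : (X → ℂ) →ₗ[ℂ] (Y → ℂ) := LinearMap.funLeft ℂ ℂ p
  let Dinv : (X → ℂ) →ₗ[ℂ] (X → ℂ) :=
  { toFun := fun u x => ((Finset.univ.filter (fun y : Y => p y = x)).card : ℂ)⁻¹ * u x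
    map_add' := fun u v => by ext x; simp [mul_add]
    map_smul' := fun c v => by ext x; simp; ring }
  let q : (Y → ℂ) →ₗ[ℂ] (Y → ℂ) := pull ∘ₗ Dinv ∘ₗ push
  have hpull : ∀ (u : X → ℂ) (y : Y), pull u y = u (p y) := fun _ _ => rfl
  have hpushpull : ∀ (u : X → ℂ) (x : X),
      push (pull u) x = ((Finset.univ.filter (fun y : Y => p y = x)).card : ℂ) * u x := by
    intro u x
    rw [pushLin_apply]
    rw [Finset.sum_congr rfl (fun y hy => by
      simp only [Finset.mem_filter, Finset.mem_univ, true_and] at hy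
      rw [hpull, hy])]
    rw [Finset.sum_const, nsmul_eq_mul]
  have hq : ∀ (m : Y → ℂ), push (q m) = push m := by
    intro m
    ext x
    show push (pull (Dinv (push m))) x = push m x
    rw [hpushpull]
    show _ * (_⁻¹ * push m x) = push m x
    rw [← mul_assoc, mul_inv_cancel₀ (hc x), one_mul]
  let idY : (Y → ℂ) →ₗ[ℂ] (Y → ℂ) := LinearMap.id
  have hsub : ∀ m : Y → ℂ, (idY - q) m ∈ W := by
    intro m
    rw [LinearMap.mem_ker, LinearMap.sub_apply, map_sub, hq]
    show push (LinearMap.id m) - push m = 0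
    rw [LinearMap.id_apply, sub_self]
  let pr : (Y → ℂ) →ₗ[ℂ] W := LinearMap.codRestrict W (idY - q) hsub
  have hqzero : ∀ w ∈ W, q w = 0 := by
    intro w hw
    rw [LinearMap.mem_ker] at hw
    show pull (Dinv (push w)) = 0
    rw [hw]
    simp
  have hfactor : σ g = pr ∘ₗ ((ρ g) ∘ₗ W.subtype) := by
    apply LinearMap.ext
    intro w
    apply Subtype.ext
    show ρ g ↑w = _
    have : (pr ∘ₗ ((ρ g) ∘ₗ W.subtype)) w = pr (ρ g ↑w) := rfl
    rw [this]
    show _ = (idY - q) (ρ g ↑w)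
    rw [LinearMap.sub_apply]
    show _ = LinearMap.id (ρ g ↑w) - q (ρ g ↑w)
    rw [LinearMap.id_apply, hqzero _ (hmaps g ↑w w.2), sub_zero]
  have hcomp : W.subtype ∘ₗ pr = idY - q :=
    LinearMap.subtype_comp_codRestrict _ _ _
  have step1 : LinearMap.trace ℂ W (σ g)
      = LinearMap.trace ℂ (Y → ℂ) (ρ g ∘ₗ (idY - q)) := by
    rw [hfactor, LinearMap.trace_comp_comm', LinearMap.comp_assoc, hcomp]
  have hDg : (Dinv ∘ₗ push) ∘ₗ (ρ g ∘ₗ pull) = ρX g := by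
    apply LinearMap.ext
    intro u
    funext x
    show Dinv (push (ρ g (pull u))) x = ρX g u x
    show _⁻¹ * (push (ρ g (pull u)) x) = _
    rw [key g (pull u) x, hpushpull, keyc g x, ← mul_assoc,
      inv_mul_cancel₀ (hc x), one_mul]
    rfl
  have step2 : LinearMap.trace ℂ (Y → ℂ) (ρ g ∘ₗ q)
      = LinearMap.trace ℂ (X → ℂ) (ρX g) := by
    have : ρ g ∘ₗ q = (ρ g ∘ₗ pull) ∘ₗ (Dinv ∘ₗ push) := by
      simp only [q, LinearMap.comp_assoc]
    rw [this, LinearMap.trace_comp_comm', hDg]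
  rw [hchar, step1]
  have : ρ g ∘ₗ (idY - q) = (ρ g : (Y → ℂ) →ₗ[ℂ] (Y → ℂ)) - ρ g ∘ₗ q := by
    apply LinearMap.ext
    intro m
    show ρ g ((idY - q) m) = ρ g m - ρ g (q m)
    rw [LinearMap.sub_apply]
    show ρ g (LinearMap.id m - q m) = _
    rw [LinearMap.id_apply, map_sub]
  rw [this, map_sub, step2, trace_permRep, trace_permRep]


def pOf (n : ℕ) (L M : List ℕ)
    (h1 : ∀ i : Fin n, M.getD (L.getD i.1 0 % n) 0 % n = i.1 := by decide)
    (h2 : ∀ i : Fin n, L.getD (M.getD i.1 0 % n) 0 % n = i.1 := by decide) :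
    Equiv.Perm (Fin n) where
  toFun i := ⟨L.getD i.1 0 % n, Nat.mod_lt _ i.pos⟩
  invFun i := ⟨M.getD i.1 0 % n, Nat.mod_lt _ i.pos⟩
  left_inv i := Fin.ext (h1 i)
  right_inv i := Fin.ext (h2 i)

def GG : Type := (ZMod 2 × ZMod 2 × ZMod 2) × ZMod 4

instance : DecidableEq GG := inferInstanceAs (DecidableEq ((ZMod 2 × ZMod 2 × ZMod 2) × ZMod 4))
instance : Fintype GG := inferInstanceAs (Fintype ((ZMod 2 × ZMod 2 × ZMod 2) × ZMod 4))

def Tp (s : ZMod 4) (v : ZMod 2 × ZMod 2 × ZMod 2) : ZMod 2 × ZMod 2 × ZMod 2 :=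
  match s.val with
  | 0 => v
  | 1 => (v.2.1, v.1 + v.2.2, v.2.2)
  | 2 => (v.1 + v.2.2, v.2.1 + v.2.2, v.2.2)
  | _ => (v.2.1 + v.2.2, v.1, v.2.2)

lemma Tp_add_right : ∀ (s : ZMod 4) (v w : ZMod 2 × ZMod 2 × ZMod 2),
    Tp s (v + w) = Tp s v + Tp s w := by decide

lemma Tp_comp : ∀ (s t : ZMod 4) (v : ZMod 2 × ZMod 2 × ZMod 2),
    Tp (s + t) v = Tp s (Tp t v) := by decide

lemma Tp_zero : ∀ v, Tp 0 v = v := by decide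

lemma Tp_zero_right : ∀ s, Tp s 0 = 0 := by decide

lemma two_eq_zero : ∀ v : ZMod 2 × ZMod 2 × ZMod 2, v + v = 0 := by decide

def gmul (a b : GG) : GG := (a.1 + Tp a.2 b.1, a.2 + b.2)
def gone : GG := ((0,0,0),0)
def ginv (a : GG) : GG := (Tp (-a.2) a.1, -a.2)

instance : Group GG where
  mul := gmul
  one := gone
  inv := ginv
  mul_assoc a b c := by
    show gmul (gmul a b) c = gmul a (gmul b c)
    unfold gmul
    refine Prod.ext ?_ (add_assoc _ _ _)
    show (a.1 + Tp a.2 b.1) + Tp (a.2 + b.2) c.1 = a.1 + Tp a.2 (b.1 + Tp b.2 c.1)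
    rw [Tp_comp, Tp_add_right, add_assoc]
  one_mul a := by
    show gmul gone a = a
    unfold gmul gone
    refine Prod.ext ?_ ?_
    · show (0 : ZMod 2 × ZMod 2 × ZMod 2) + Tp 0 a.1 = a.1
      rw [Tp_zero, zero_add]
    · exact zero_add _
  mul_one a := by
    show gmul a gone = a
    unfold gmul gone
    refine Prod.ext ?_ ?_
    · show a.1 + Tp a.2 0 = a.1
      rw [Tp_zero_right, add_zero]
    · exact add_zero _
  inv_mul_cancel a := by
    show gmul (ginv a) a = gone
    unfold gmul ginv gone
    refine Prod.ext ?_ ?_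
    · show Tp (-a.2) a.1 + Tp (-a.2) a.1 = (0 : ZMod 2 × ZMod 2 × ZMod 2)
      exact two_eq_zero _
    · exact neg_add_cancel _

def gIdx (g : GG) : ℕ := g.1.1.val + 2*g.1.2.1.val + 4*g.1.2.2.val + 8*g.2.val
def permsB : List (Equiv.Perm (Fin 8)) := [
  pOf 8 [0,1,2,3,4,5,6,7] [0,1,2,3,4,5,6,7],
  pOf 8 [0,1,2,3,5,4,7,6] [0,1,2,3,5,4,7,6],
  pOf 8 [1,0,3,2,4,5,6,7] [1,0,3,2,4,5,6,7],
  pOf 8 [1,0,3,2,5,4,7,6] [1,0,3,2,5,4,7,6],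
  pOf 8 [2,3,0,1,6,7,4,5] [2,3,0,1,6,7,4,5],
  pOf 8 [2,3,0,1,7,6,5,4] [2,3,0,1,7,6,5,4],
  pOf 8 [3,2,1,0,6,7,4,5] [3,2,1,0,6,7,4,5],
  pOf 8 [3,2,1,0,7,6,5,4] [3,2,1,0,7,6,5,4],
  pOf 8 [5,4,7,6,0,1,3,2] [4,5,7,6,1,0,3,2],
  pOf 8 [4,5,6,7,0,1,3,2] [4,5,7,6,0,1,2,3],
  pOf 8 [5,4,7,6,1,0,2,3] [5,4,6,7,1,0,3,2],
  pOf 8 [4,5,6,7,1,0,2,3] [5,4,6,7,0,1,2,3],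
  pOf 8 [7,6,5,4,2,3,1,0] [7,6,4,5,3,2,1,0],
  pOf 8 [6,7,4,5,2,3,1,0] [7,6,4,5,2,3,0,1],
  pOf 8 [7,6,5,4,3,2,0,1] [6,7,5,4,3,2,1,0],
  pOf 8 [6,7,4,5,3,2,0,1] [6,7,5,4,2,3,0,1],
  pOf 8 [1,0,2,3,5,4,6,7] [1,0,2,3,5,4,6,7],
  pOf 8 [1,0,2,3,4,5,7,6] [1,0,2,3,4,5,7,6],
  pOf 8 [0,1,3,2,5,4,6,7] [0,1,3,2,5,4,6,7],
  pOf 8 [0,1,3,2,4,5,7,6] [0,1,3,2,4,5,7,6],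
  pOf 8 [3,2,0,1,7,6,4,5] [2,3,1,0,6,7,5,4],
  pOf 8 [3,2,0,1,6,7,5,4] [2,3,1,0,7,6,4,5],
  pOf 8 [2,3,1,0,7,6,4,5] [3,2,0,1,6,7,5,4],
  pOf 8 [2,3,1,0,6,7,5,4] [3,2,0,1,7,6,4,5],
  pOf 8 [4,5,7,6,1,0,3,2] [5,4,7,6,0,1,3,2],
  pOf 8 [5,4,6,7,1,0,3,2] [5,4,7,6,1,0,2,3],
  pOf 8 [4,5,7,6,0,1,2,3] [4,5,6,7,0,1,3,2],
  pOf 8 [5,4,6,7,0,1,2,3] [4,5,6,7,1,0,2,3],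
  pOf 8 [6,7,5,4,3,2,1,0] [7,6,5,4,3,2,0,1],
  pOf 8 [7,6,4,5,3,2,1,0] [7,6,5,4,2,3,1,0],
  pOf 8 [6,7,5,4,2,3,0,1] [6,7,4,5,3,2,0,1],
  pOf 8 [7,6,4,5,2,3,0,1] [6,7,4,5,2,3,1,0]
]

def permsY : List (Equiv.Perm (Fin 12)) := [
  pOf 12 [0,1,2,3,4,5,6,7,8,9,10,11] [0,1,2,3,4,5,6,7,8,9,10,11],
  pOf 12 [0,1,2,3,4,5,6,7,11,10,9,8] [0,1,2,3,4,5,6,7,11,10,9,8],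
  pOf 12 [0,1,2,3,7,6,5,4,8,9,10,11] [0,1,2,3,7,6,5,4,8,9,10,11],
  pOf 12 [0,1,2,3,7,6,5,4,11,10,9,8] [0,1,2,3,7,6,5,4,11,10,9,8],
  pOf 12 [0,1,2,3,4,6,5,7,8,10,9,11] [0,1,2,3,4,6,5,7,8,10,9,11],
  pOf 12 [0,1,2,3,4,6,5,7,11,9,10,8] [0,1,2,3,4,6,5,7,11,9,10,8],
  pOf 12 [0,1,2,3,7,5,6,4,8,10,9,11] [0,1,2,3,7,5,6,4,8,10,9,11],
  pOf 12 [0,1,2,3,7,5,6,4,11,9,10,8] [0,1,2,3,7,5,6,4,11,9,10,8],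
  pOf 12 [1,0,3,2,11,10,9,8,5,4,7,6] [1,0,3,2,9,8,11,10,7,6,5,4],
  pOf 12 [1,0,3,2,8,9,10,11,5,4,7,6] [1,0,3,2,9,8,11,10,4,5,6,7],
  pOf 12 [1,0,3,2,11,10,9,8,6,7,4,5] [1,0,3,2,10,11,8,9,7,6,5,4],
  pOf 12 [1,0,3,2,8,9,10,11,6,7,4,5] [1,0,3,2,10,11,8,9,4,5,6,7],
  pOf 12 [1,0,3,2,11,9,10,8,6,4,7,5] [1,0,3,2,9,11,8,10,7,5,6,4],
  pOf 12 [1,0,3,2,8,10,9,11,6,4,7,5] [1,0,3,2,9,11,8,10,4,6,5,7],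
  pOf 12 [1,0,3,2,11,9,10,8,5,7,4,6] [1,0,3,2,10,8,11,9,7,5,6,4],
  pOf 12 [1,0,3,2,8,10,9,11,5,7,4,6] [1,0,3,2,10,8,11,9,4,6,5,7],
  pOf 12 [0,1,2,3,6,7,4,5,10,11,8,9] [0,1,2,3,6,7,4,5,10,11,8,9],
  pOf 12 [0,1,2,3,6,7,4,5,9,8,11,10] [0,1,2,3,6,7,4,5,9,8,11,10],
  pOf 12 [0,1,2,3,5,4,7,6,10,11,8,9] [0,1,2,3,5,4,7,6,10,11,8,9],
  pOf 12 [0,1,2,3,5,4,7,6,9,8,11,10] [0,1,2,3,5,4,7,6,9,8,11,10],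
  pOf 12 [0,1,2,3,5,7,4,6,9,11,8,10] [0,1,2,3,6,4,7,5,10,8,11,9],
  pOf 12 [0,1,2,3,5,7,4,6,10,8,11,9] [0,1,2,3,6,4,7,5,9,11,8,10],
  pOf 12 [0,1,2,3,6,4,7,5,9,11,8,10] [0,1,2,3,5,7,4,6,10,8,11,9],
  pOf 12 [0,1,2,3,6,4,7,5,10,8,11,9] [0,1,2,3,5,7,4,6,9,11,8,10],
  pOf 12 [1,0,3,2,9,8,11,10,7,6,5,4] [1,0,3,2,11,10,9,8,5,4,7,6],
  pOf 12 [1,0,3,2,10,11,8,9,7,6,5,4] [1,0,3,2,11,10,9,8,6,7,4,5],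
  pOf 12 [1,0,3,2,9,8,11,10,4,5,6,7] [1,0,3,2,8,9,10,11,5,4,7,6],
  pOf 12 [1,0,3,2,10,11,8,9,4,5,6,7] [1,0,3,2,8,9,10,11,6,7,4,5],
  pOf 12 [1,0,3,2,10,8,11,9,7,5,6,4] [1,0,3,2,11,9,10,8,5,7,4,6],
  pOf 12 [1,0,3,2,9,11,8,10,7,5,6,4] [1,0,3,2,11,9,10,8,6,4,7,5],
  pOf 12 [1,0,3,2,10,8,11,9,4,6,5,7] [1,0,3,2,8,10,9,11,5,7,4,6],
  pOf 12 [1,0,3,2,9,11,8,10,4,6,5,7] [1,0,3,2,8,10,9,11,6,4,7,5]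
]

def permsX : List (Equiv.Perm (Fin 5)) := [
  pOf 5 [0,1,2,3,4] [0,1,2,3,4],
  pOf 5 [0,1,2,3,4] [0,1,2,3,4],
  pOf 5 [0,1,2,3,4] [0,1,2,3,4],
  pOf 5 [0,1,2,3,4] [0,1,2,3,4],
  pOf 5 [0,1,2,3,4] [0,1,2,3,4],
  pOf 5 [0,1,2,3,4] [0,1,2,3,4],
  pOf 5 [0,1,2,3,4] [0,1,2,3,4],
  pOf 5 [0,1,2,3,4] [0,1,2,3,4],
  pOf 5 [0,3,4,2,1] [0,4,3,1,2],
  pOf 5 [0,3,4,2,1] [0,4,3,1,2],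
  pOf 5 [0,3,4,2,1] [0,4,3,1,2],
  pOf 5 [0,3,4,2,1] [0,4,3,1,2],
  pOf 5 [0,3,4,2,1] [0,4,3,1,2],
  pOf 5 [0,3,4,2,1] [0,4,3,1,2],
  pOf 5 [0,3,4,2,1] [0,4,3,1,2],
  pOf 5 [0,3,4,2,1] [0,4,3,1,2],
  pOf 5 [0,2,1,4,3] [0,2,1,4,3],
  pOf 5 [0,2,1,4,3] [0,2,1,4,3],
  pOf 5 [0,2,1,4,3] [0,2,1,4,3],
  pOf 5 [0,2,1,4,3] [0,2,1,4,3],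
  pOf 5 [0,2,1,4,3] [0,2,1,4,3],
  pOf 5 [0,2,1,4,3] [0,2,1,4,3],
  pOf 5 [0,2,1,4,3] [0,2,1,4,3],
  pOf 5 [0,2,1,4,3] [0,2,1,4,3],
  pOf 5 [0,4,3,1,2] [0,3,4,2,1],
  pOf 5 [0,4,3,1,2] [0,3,4,2,1],
  pOf 5 [0,4,3,1,2] [0,3,4,2,1],
  pOf 5 [0,4,3,1,2] [0,3,4,2,1],
  pOf 5 [0,4,3,1,2] [0,3,4,2,1],
  pOf 5 [0,4,3,1,2] [0,3,4,2,1],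
  pOf 5 [0,4,3,1,2] [0,3,4,2,1],
  pOf 5 [0,4,3,1,2] [0,3,4,2,1]
]
def fB (g : GG) : Equiv.Perm (Fin 8) := permsB.getD (gIdx g) 1
def fY (g : GG) : Equiv.Perm (Fin 12) := permsY.getD (gIdx g) 1
def fX (g : GG) : Equiv.Perm (Fin 5) := permsX.getD (gIdx g) 1

lemma fB_mul : ∀ a b : GG, fB (a * b) = fB a * fB b := by decide
lemma fY_mul : ∀ a b : GG, fY (a * b) = fY a * fY b := by decide
lemma fX_mul : ∀ a b : GG, fX (a * b) = fX a * fX b := by decide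
lemma fB_one : fB 1 = 1 := by decide
lemma fY_one : fY 1 = 1 := by decide
lemma fX_one : fX 1 = 1 := by decide

def ΦB : GG →* Equiv.Perm (Fin 8) := { toFun := fB, map_one' := fB_one, map_mul' := fB_mul }
def ΦY : GG →* Equiv.Perm (Fin 12) := { toFun := fY, map_one' := fY_one, map_mul' := fY_mul }
def ΦX : GG →* Equiv.Perm (Fin 5) := { toFun := fX, map_one' := fX_one, map_mul' := fX_mul }
def Φ1 : GG →* Equiv.Perm (Fin 1) := 1

def mChi (g : GG) : ℤ := ((Finset.univ.filter fun y : Fin 12 => ΦY g y = y).card : ℤ)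
  - ((Finset.univ.filter fun x : Fin 5 => ΦX g x = x).card : ℤ)
def mTh (g : GG) : ℤ := ((Finset.univ.filter fun y : Fin 8 => ΦB g y = y).card : ℤ)
  - ((Finset.univ.filter fun x : Fin 1 => Φ1 g x = x).card : ℤ)

lemma mChi_one : mChi 1 = 7 := by decide
lemma mTh_one : mTh 1 = 7 := by decide
lemma mChi_vals : ∀ g : GG, g ≠ 1 → mChi g = -1 ∨ mChi g = 3 := by decide
lemma mTh_vals : ∀ g : GG, g ≠ 1 → mTh g = -1 ∨ mTh g = 3 := by decide
lemma mChi_sum : (∑ g : GG, mChi g * mChi g) = 192 := by decide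
lemma mTh_sum : (∑ g : GG, mTh g * mTh g) = 128 := by decide
lemma card_GG : Fintype.card GG = 32 := by decide

def gm : GG := ((1,1,0),0)
def gp : GG := ((1,0,0),0)
lemma gm_ne : gm ≠ 1 := by decide
lemma gp_ne : gp ≠ 1 := by decide
lemma mChi_gm : mChi gm = -1 := by decide
lemma mChi_gp : mChi gp = 3 := by decide
lemma mTh_gm : mTh gm = -1 := by decide
lemma mTh_gp : mTh gp = 3 := by decide

def pYX (i : Fin 12) : Fin 5 :=
  ⟨[0,0,0,0,1,2,2,1,3,4,4,3].getD i.1 0 % 5, Nat.mod_lt _ (by norm_num)⟩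

lemma pYX_surj : Function.Surjective pYX := by decide

lemma pYX_equiv : ∀ (g : GG) (y : Fin 12), pYX (ΦY g y) = ΦX g (pYX y) := by decide

def pB : Fin 8 → Fin 1 := fun _ => 0

lemma pB_surj : Function.Surjective pB := fun x => ⟨0, Subsingleton.elim _ _⟩

lemma pB_equiv : ∀ (g : GG) (y : Fin 8), pB (ΦB g y) = Φ1 g (pB y) :=
  fun _ _ => Subsingleton.elim _ _

noncomputable def chiF : GG → ℂ := fun g =>
  ((Finset.univ.filter fun y : Fin 12 => ΦY g y = y).card : ℂ)
    - ((Finset.univ.filter fun x : Fin 5 => ΦX g x = x).card : ℂ)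

noncomputable def thF : GG → ℂ := fun g =>
  ((Finset.univ.filter fun y : Fin 8 => ΦB g y = y).card : ℂ)
    - ((Finset.univ.filter fun x : Fin 1 => Φ1 g x = x).card : ℂ)

lemma chiF_cast : ∀ g, chiF g = ((mChi g : ℤ) : ℂ) := by
  intro g
  unfold chiF mChi
  push_cast
  ring

lemma thF_cast : ∀ g, thF g = ((mTh g : ℤ) : ℂ) := by
  intro g
  unfold thF mTh
  push_cast
  ring

/-- there is a group of order 32 with two characters `χ, θ`, both sharp of
type `L = {−1, 3}`, with `⟨χ,χ⟩ = 6` and `⟨θ,θ⟩ = 4`; so `⟨χ,χ⟩` is not determined by `L`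
(a counterexample to the conjecture of Cameron and Kiyota). -/
theorem stmt2 : ∃ (G : Type) (instG : Group G) (instF : Fintype G) (χ θ : G → ℂ),
    @Fintype.card G instF = 32 ∧
    @IsChar G instG χ ∧ @IsChar G instG θ ∧
    @IsSharp G instG instF χ {-1, 3} ∧ @IsSharp G instG instF θ {-1, 3} ∧
    @charInner G instG instF χ χ = 6 ∧ @charInner G instG instF θ θ = 4 := by
  obtain ⟨Vc, hVc⟩ := char_fix_sub ΦY ΦX pYX pYX_surj pYX_equiv
  obtain ⟨Vt, hVt⟩ := char_fix_sub ΦB Φ1 pB pB_surj pB_equiv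
  have hsharp : ∀ (f : GG → ℂ) (mv : GG → ℤ), (∀ g, f g = ((mv g : ℤ) : ℂ)) →
      mv 1 = 7 → (∀ g : GG, g ≠ 1 → mv g = -1 ∨ mv g = 3) →
      ∀ (a b : GG), a ≠ 1 → b ≠ 1 → mv a = -1 → mv b = 3 →
      IsSharp GG f {-1, 3} := by
    intro f mv hcast h1 hvals a b ha hb hma hmb
    constructor
    · ext z
      simp only [Finset.coe_insert, Finset.coe_singleton, Set.mem_insert_iff,
        Set.mem_singleton_iff, Set.mem_setOf_eq]
      constructor
      · rintro (rfl | rfl)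
        · exact ⟨a, ha, by rw [hcast, hma]; norm_num⟩
        · exact ⟨b, hb, by rw [hcast, hmb]; norm_num⟩
      · rintro ⟨g, hg, rfl⟩
        rcases hvals g hg with h | h <;> rw [hcast, h] <;> norm_num
    · have hne : (-1 : ℂ) ∉ ({3} : Finset ℂ) := by
        simp only [Finset.mem_singleton]
        norm_num
      rw [Finset.prod_insert hne, Finset.prod_singleton, hcast, h1, card_GG]
      norm_num
  have hinner : ∀ (f : GG → ℂ) (mv : GG → ℤ) (s : ℤ), (∀ g, f g = ((mv g : ℤ) : ℂ)) →
      (∑ g : GG, mv g * mv g) = s →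
      charInner GG f f = (s : ℂ) / 32 := by
    intro f mv s hcast hsum
    unfold charInner
    rw [card_GG]
    have : ∀ g : GG, f g * (starRingEnd ℂ) (f g) = ((mv g * mv g : ℤ) : ℂ) := by
      intro g
      rw [hcast]
      rw [map_intCast]
      push_cast
      ring
    rw [Finset.sum_congr rfl fun g _ => this g]
    rw [← Int.cast_sum, hsum]
    push_cast
    ring
  refine ⟨GG, inferInstance, inferInstance, chiF, thF, card_GG,
    ⟨Vc, fun g => (hVc g).symm⟩, ⟨Vt, fun g => (hVt g).symm⟩,
    hsharp chiF mChi chiF_cast mChi_one mChi_vals gm gp gm_ne gp_ne mChi_gm mChi_gp,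
    hsharp thF mTh thF_cast mTh_one mTh_vals gm gp gm_ne gp_ne mTh_gm mTh_gp,
    ?_, ?_⟩
  · rw [hinner chiF mChi 192 chiF_cast mChi_sum]
    norm_num
  · rw [hinner thF mTh 128 thF_cast mTh_sum]
    norm_num
end

section
/- There exist finite groups G and H, a character χ of G, and a character θ of H, such that (G, χ) and (H, θ) are both normalized and sharp of the same type L = {−1, 0, 2}, while ⟨χ, χ⟩_G = 1 and ⟨θ, θ⟩_H = 2. (One may take G the alternating group A₇ with an irreducible sharp character of degree 14, and H the dihedral group of order 12.) -/
open CategoryTheory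

set_option linter.unusedSectionVars false
set_option maxRecDepth 2000000


section DelRep

variable {G : Type} [Group G] {X : Type} [Fintype X] [DecidableEq X]
  [MulAction G X] (x₀ : X) (τ : G →* ℂ)

/-- Extend a function on `{x // x ≠ x₀}` by `0` at `x₀`. -/
def extZ (f : {x : X // x ≠ x₀} → ℂ) : X → ℂ :=
  fun x => if h : x = x₀ then 0 else f ⟨x, h⟩

lemma extZ_add (f f' : {x : X // x ≠ x₀} → ℂ) (x : X) :
    extZ x₀ (f + f') x = extZ x₀ f x + extZ x₀ f' x := by
  by_cases h : x = x₀ <;> simp [extZ, h]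

lemma extZ_smul (c : ℂ) (f : {x : X // x ≠ x₀} → ℂ) (x : X) :
    extZ x₀ (c • f) x = c * extZ x₀ f x := by
  by_cases h : x = x₀ <;> simp [extZ, h]

/-- The (τ-twisted) deleted permutation action linear map. -/
def delMap (g : G) : ({x : X // x ≠ x₀} → ℂ) →ₗ[ℂ] ({x : X // x ≠ x₀} → ℂ) where
  toFun f := fun w => τ g * (extZ x₀ f (g⁻¹ • (w : X)) - extZ x₀ f (g⁻¹ • x₀))
  map_add' f f' := by
    funext w
    simp only [extZ_add, Pi.add_apply]
    ring
  map_smul' c f := by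
    funext w
    simp only [extZ_smul, Pi.smul_apply, RingHom.id_apply, smul_eq_mul]
    ring

lemma extZ_delMap (g : G) (f : {x : X // x ≠ x₀} → ℂ) (x : X) :
    extZ x₀ (delMap x₀ τ g f) x = τ g * (extZ x₀ f (g⁻¹ • x) - extZ x₀ f (g⁻¹ • x₀)) := by
  by_cases h : x = x₀
  · subst h
    simp [extZ]
  · simp only [extZ, dif_neg h]
    rfl

/-- The twisted deleted permutation representation. -/
def delRep : Representation ℂ G ({x : X // x ≠ x₀} → ℂ) where
  toFun := delMap x₀ τ
  map_one' := by
    refine LinearMap.ext fun f => funext fun w => ?_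
    show delMap x₀ τ 1 f w = f w
    simp only [delMap, LinearMap.coe_mk, AddHom.coe_mk, map_one, inv_one, one_smul, one_mul]
    unfold extZ
    rw [dif_neg w.2, dif_pos rfl, sub_zero]
  map_mul' g h := by
    refine LinearMap.ext fun f => funext fun w => ?_
    show delMap x₀ τ (g * h) f w = τ g * (extZ x₀ (delMap x₀ τ h f) (g⁻¹ • (w : X))
      - extZ x₀ (delMap x₀ τ h f) (g⁻¹ • x₀))
    rw [extZ_delMap, extZ_delMap]
    show τ (g * h) * (extZ x₀ f ((g * h)⁻¹ • (w : X)) - extZ x₀ f ((g * h)⁻¹ • x₀)) = _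
    simp only [map_mul, mul_inv_rev, mul_smul]
    ring

lemma trace_delRep (g : G) :
    LinearMap.trace ℂ _ (delRep x₀ τ g) =
      τ g * ((Fintype.card {x : X // g • x = x} : ℂ) - 1) := by
  classical
  set q : X → ℂ := fun x => (if g⁻¹ • x = x then (1:ℂ) else 0) -
      (if g⁻¹ • x₀ = x then (1:ℂ) else 0) with hq
  have hdiag : ∀ w : {x : X // x ≠ x₀},
      Matrix.diag (LinearMap.toMatrix (Pi.basisFun ℂ _) (Pi.basisFun ℂ _) (delRep x₀ τ g)) w
        = τ g * q (w : X) := by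
    intro w
    have hsingle : ∀ x : X, extZ x₀ (Pi.single w (1 : ℂ)) x = if x = (w : X) then 1 else 0 := by
      intro x
      by_cases h : x = x₀
      · subst h
        rw [extZ, dif_pos rfl, if_neg fun hx => w.2 hx.symm]
      · rw [extZ, dif_neg h, Pi.single_apply]
        simp [Subtype.ext_iff, eq_comm]
    simp only [Matrix.diag_apply, LinearMap.toMatrix_apply, Pi.basisFun_repr, Pi.basisFun_apply]
    show τ g * (extZ x₀ (Pi.single w (1:ℂ)) (g⁻¹ • (w : X))
        - extZ x₀ (Pi.single w 1) (g⁻¹ • x₀)) = _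
    rw [hsingle, hsingle]
  rw [LinearMap.trace_eq_matrix_trace ℂ (Pi.basisFun ℂ {x : X // x ≠ x₀}), Matrix.trace,
    Finset.sum_congr rfl fun w _ => hdiag w, ← Finset.mul_sum]
  congr 1
  have h1 : ∑ w : {x : X // x ≠ x₀}, q (w : X) = ∑ x ∈ Finset.univ.erase x₀, q x :=
    (Finset.sum_subtype _ (fun x => by simp [Finset.mem_erase]) q).symm
  have h2 : ∑ x ∈ Finset.univ.erase x₀, q x + q x₀ = ∑ x : X, q x :=
    Finset.sum_erase_add _ _ (Finset.mem_univ x₀)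
  have hq0 : q x₀ = 0 := by simp [hq]
  have h3 : ∑ x : X, q x = (Fintype.card {x : X // g • x = x} : ℂ) - 1 := by
    rw [hq]
    rw [Finset.sum_sub_distrib]
    congr 1
    · rw [Finset.sum_boole]
      have hcc : Fintype.card {x : X // g • x = x} = Fintype.card {x : X // g⁻¹ • x = x} :=
        Fintype.card_congr (Equiv.subtypeEquivRight fun x => by
          rw [inv_smul_eq_iff]; exact ⟨fun hx => hx.symm, fun hx => hx.symm⟩)
      rw [hcc, Fintype.card_subtype]
    · simp
  rw [h1, ← h3, ← h2, hq0, add_zero]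

end DelRep
section ProdRep
variable {G : Type} [Group G] {V₁ V₂ : Type} [AddCommGroup V₁] [Module ℂ V₁]
  [AddCommGroup V₂] [Module ℂ V₂]

/-- Direct sum (product) of two representations. -/
def prodRep (ρ₁ : Representation ℂ G V₁) (ρ₂ : Representation ℂ G V₂) :
    Representation ℂ G (V₁ × V₂) where
  toFun g := (ρ₁ g).prodMap (ρ₂ g)
  map_one' := by
    refine LinearMap.ext fun v => ?_
    simp
  map_mul' g h := by
    refine LinearMap.ext fun v => ?_
    simp

/-- One-dimensional representation attached to a monoid hom `τ : G →* ℂ`. -/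
noncomputable def scalRep (τ : G →* ℂ) : Representation ℂ G ℂ where
  toFun g := τ g • LinearMap.id
  map_one' := by
    refine LinearMap.ext fun v => ?_
    simp
  map_mul' g h := by
    refine LinearMap.ext fun v => ?_
    simp only [map_mul, LinearMap.smul_apply, LinearMap.id_apply, smul_eq_mul,
      Module.End.mul_apply]
    ring

lemma trace_scalRep (τ : G →* ℂ) (g : G) : LinearMap.trace ℂ ℂ (scalRep τ g) = τ g := by
  show LinearMap.trace ℂ ℂ (τ g • LinearMap.id) = τ g
  rw [map_smul, LinearMap.trace_id]
  simp

end ProdRep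

abbrev SL3 : Type := Matrix.SpecialLinearGroup (Fin 3) (ZMod 2)
abbrev Xv : Type := {v : Fin 3 → ZMod 2 // v ≠ 0}

instance : DecidableEq SL3 := fun a b =>
  @decidable_of_iff _ (∀ i j : Fin 3, a.val i j = b.val i j) (Matrix.SpecialLinearGroup.ext_iff a b).symm
    (@Fintype.decidableForallFintype _ _ (fun _ => Fintype.decidableForallFintype) _)

instance XvAction : MulAction SL3 Xv where
  smul g v := ⟨g.val.mulVec v.val, by
    intro h0
    apply v.2
    have h1 : v.val = (g⁻¹).val.mulVec (g.val.mulVec v.val) := by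
      rw [Matrix.mulVec_mulVec, ← Matrix.SpecialLinearGroup.coe_mul, inv_mul_cancel,
        Matrix.SpecialLinearGroup.coe_one, Matrix.one_mulVec]
    rw [h0, Matrix.mulVec_zero] at h1
    exact h1⟩
  one_smul v := by
    apply Subtype.ext
    show (1 : SL3).val.mulVec v.val = v.val
    rw [Matrix.SpecialLinearGroup.coe_one, Matrix.one_mulVec]
  mul_smul g h v := by
    apply Subtype.ext
    show (g * h).val.mulVec v.val = g.val.mulVec (h.val.mulVec v.val)
    rw [Matrix.mulVec_mulVec, Matrix.SpecialLinearGroup.coe_mul]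

/-- Integer fixed-point count minus one. -/
def Fg (g : SL3) : ℤ := (Fintype.card {x : Xv // g • x = x} : ℤ) - 1

theorem factsG :
    Fintype.card SL3 = 168 ∧
    Fg 1 = 6 ∧
    (∀ g : SL3, g ≠ 1 → (Fg g = -1 ∨ Fg g = 0 ∨ Fg g = 2)) ∧
    (∃ g : SL3, g ≠ 1 ∧ Fg g = -1) ∧
    (∃ g : SL3, g ≠ 1 ∧ Fg g = 0) ∧
    (∃ g : SL3, g ≠ 1 ∧ Fg g = 2) ∧
    (∑ g : SL3, Fg g = 0) ∧
    (∑ g : SL3, Fg g * Fg g = 168) := by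
  decide

abbrev Hgrp : Type := Equiv.Perm (Fin 3) × Multiplicative (ZMod 2)

instance HAction : MulAction Hgrp (Fin 3) where
  smul g i := g.1 i
  one_smul i := rfl
  mul_smul g h i := rfl

/-- second-factor sign hom to ℤ -/
def psiZ : Hgrp →* ℤ where
  toFun g := if g.2 = 1 then 1 else -1
  map_one' := rfl
  map_mul' a b := by
    have key : ∀ x y : Multiplicative (ZMod 2),
        (if x * y = 1 then (1:ℤ) else -1) = (if x = 1 then (1:ℤ) else -1) *
          (if y = 1 then (1:ℤ) else -1) := by decide
    exact key a.2 b.2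

def sgnZ : Hgrp →* ℤ := (Units.coeHom ℤ).comp (Equiv.Perm.sign.comp (MonoidHom.fst _ _))

def Fh (g : Hgrp) : ℤ := (Fintype.card {i : Fin 3 // g • i = i} : ℤ) - 1

def th (g : Hgrp) : ℤ := psiZ g * Fh g + sgnZ g

theorem factsH1 : Fintype.card Hgrp = 12 := by decide
theorem factsH2 : th 1 = 3 := by decide
theorem factsH3 : ∀ g : Hgrp, g ≠ 1 → (th g = -1 ∨ th g = 0 ∨ th g = 2) := by decide
theorem factsH4 : ∃ g : Hgrp, g ≠ 1 ∧ th g = -1 := by decide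
theorem factsH5 : ∃ g : Hgrp, g ≠ 1 ∧ th g = 0 := by decide
theorem factsH6 : ∃ g : Hgrp, g ≠ 1 ∧ th g = 2 := by decide
theorem factsH7 : ∑ g : Hgrp, th g = 0 := by decide
theorem factsH8 : ∑ g : Hgrp, th g * th g = 24 := by decide

/-! ### The characters -/

def x0G : Xv := ⟨![1, 0, 0], by decide⟩

noncomputable def chiG : SL3 → ℂ := (FDRep.of (delRep x0G (1 : SL3 →* ℂ))).character

noncomputable def psiC : Hgrp →* ℂ := (Int.castRingHom ℂ).toMonoidHom.comp psiZ
noncomputable def sgnC : Hgrp →* ℂ := (Int.castRingHom ℂ).toMonoidHom.comp sgnZ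

noncomputable def thetaH : Hgrp → ℂ :=
  (FDRep.of (prodRep (delRep (0 : Fin 3) psiC) (scalRep sgnC))).character

lemma chiG_eq (g : SL3) : chiG g = ((Fg g : ℤ) : ℂ) := by
  show LinearMap.trace ℂ ({x : Xv // x ≠ x0G} → ℂ) (delRep x0G (1 : SL3 →* ℂ) g) = _
  rw [trace_delRep]
  rw [Fg]
  push_cast
  simp

lemma thetaH_eq (g : Hgrp) : thetaH g = ((th g : ℤ) : ℂ) := by
  show LinearMap.trace ℂ (({i : Fin 3 // i ≠ 0} → ℂ) × ℂ)
    (LinearMap.prodMap (delRep (0 : Fin 3) psiC g) (scalRep sgnC g)) = _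
  rw [LinearMap.trace_prodMap', trace_delRep, trace_scalRep]
  have h1 : psiC g = ((psiZ g : ℤ) : ℂ) := rfl
  have h2 : sgnC g = ((sgnZ g : ℤ) : ℂ) := rfl
  rw [h1, h2, th, Fh]
  push_cast
  ring

lemma prod_L (d : ℂ) : ∏ l ∈ ({-1, 0, 2} : Finset ℂ), (d - l) = (d + 1) * (d * (d - 2)) := by
  rw [show ({-1, 0, 2} : Finset ℂ) = insert (-1) (insert 0 ({2} : Finset ℂ)) from rfl]
  rw [Finset.prod_insert (by norm_num), Finset.prod_insert (by norm_num),
    Finset.prod_singleton]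
  ring

/-! ### Verification of the properties -/

lemma isChar_chiG : IsChar SL3 chiG := ⟨_, fun _ => rfl⟩

lemma isChar_thetaH : IsChar Hgrp thetaH := ⟨_, fun _ => rfl⟩

lemma isNormalized_chiG : IsNormalized SL3 chiG := by
  unfold IsNormalized charInner
  have : ∀ g : SL3, chiG g * (starRingEnd ℂ) 1 = ((Fg g : ℤ) : ℂ) := by
    intro g
    rw [map_one, mul_one, chiG_eq]
  rw [Finset.sum_congr rfl fun g _ => this g, ← Int.cast_sum, factsG.2.2.2.2.2.2.1]
  simp

lemma isNormalized_thetaH : IsNormalized Hgrp thetaH := by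
  unfold IsNormalized charInner
  have : ∀ g : Hgrp, thetaH g * (starRingEnd ℂ) 1 = ((th g : ℤ) : ℂ) := by
    intro g
    rw [map_one, mul_one, thetaH_eq]
  rw [Finset.sum_congr rfl fun g _ => this g, ← Int.cast_sum, factsH7]
  simp

lemma isSharp_chiG : IsSharp SL3 chiG {-1, 0, 2} := by
  constructor
  · ext z
    simp only [Finset.coe_insert, Finset.coe_singleton, Set.mem_insert_iff,
      Set.mem_singleton_iff, Set.mem_setOf_eq]
    constructor
    · rintro (rfl | rfl | rfl)
      · obtain ⟨g, hg, hF⟩ := factsG.2.2.2.1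
        exact ⟨g, hg, by rw [chiG_eq, hF]; norm_num⟩
      · obtain ⟨g, hg, hF⟩ := factsG.2.2.2.2.1
        exact ⟨g, hg, by rw [chiG_eq, hF]; norm_num⟩
      · obtain ⟨g, hg, hF⟩ := factsG.2.2.2.2.2.1
        exact ⟨g, hg, by rw [chiG_eq, hF]; norm_num⟩
    · rintro ⟨g, hg, rfl⟩
      rcases factsG.2.2.1 g hg with h | h | h <;> rw [chiG_eq, h] <;> norm_num
  · rw [prod_L, chiG_eq, factsG.2.1, factsG.1]
    norm_num

lemma isSharp_thetaH : IsSharp Hgrp thetaH {-1, 0, 2} := by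
  constructor
  · ext z
    simp only [Finset.coe_insert, Finset.coe_singleton, Set.mem_insert_iff,
      Set.mem_singleton_iff, Set.mem_setOf_eq]
    constructor
    · rintro (rfl | rfl | rfl)
      · obtain ⟨g, hg, hF⟩ := factsH4
        exact ⟨g, hg, by rw [thetaH_eq, hF]; norm_num⟩
      · obtain ⟨g, hg, hF⟩ := factsH5
        exact ⟨g, hg, by rw [thetaH_eq, hF]; norm_num⟩
      · obtain ⟨g, hg, hF⟩ := factsH6
        exact ⟨g, hg, by rw [thetaH_eq, hF]; norm_num⟩
    · rintro ⟨g, hg, rfl⟩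
      rcases factsH3 g hg with h | h | h <;> rw [thetaH_eq, h] <;> norm_num
  · rw [prod_L, thetaH_eq, factsH2, factsH1]
    norm_num

lemma inner_chiG : charInner SL3 chiG chiG = 1 := by
  unfold charInner
  have : ∀ g : SL3, chiG g * (starRingEnd ℂ) (chiG g) = ((Fg g * Fg g : ℤ) : ℂ) := by
    intro g
    rw [chiG_eq, map_intCast]
    push_cast
    ring
  rw [Finset.sum_congr rfl fun g _ => this g, ← Int.cast_sum, factsG.2.2.2.2.2.2.2, factsG.1]
  norm_num

lemma inner_thetaH : charInner Hgrp thetaH thetaH = 2 := by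
  unfold charInner
  have : ∀ g : Hgrp, thetaH g * (starRingEnd ℂ) (thetaH g) = ((th g * th g : ℤ) : ℂ) := by
    intro g
    rw [thetaH_eq, map_intCast]
    push_cast
    ring
  rw [Finset.sum_congr rfl fun g _ => this g, ← Int.cast_sum, factsH8, factsH1]
  norm_num

/-- there are groups `G`, `H` with characters `χ`, `θ`, both normalized and
sharp of the same type `L = {−1, 0, 2}`, with `⟨χ,χ⟩_G = 1` and `⟨θ,θ⟩_H = 2`. -/
theorem stmt4 : ∃ (G H : Type) (instG : Group G) (instFG : Fintype G)
    (instH : Group H) (instFH : Fintype H) (χ : G → ℂ) (θ : H → ℂ),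
    @IsChar G instG χ ∧ @IsChar H instH θ ∧
    @IsNormalized G instG instFG χ ∧ @IsNormalized H instH instFH θ ∧
    @IsSharp G instG instFG χ {-1, 0, 2} ∧ @IsSharp H instH instFH θ {-1, 0, 2} ∧
    @charInner G instG instFG χ χ = 1 ∧ @charInner H instH instFH θ θ = 2 := by
  exact ⟨SL3, Hgrp, _, _, _, _, chiG, thetaH, isChar_chiG, isChar_thetaH,
    isNormalized_chiG, isNormalized_thetaH, isSharp_chiG, isSharp_thetaH,
    inner_chiG, inner_thetaH⟩
end

section
/- There exist characters χ and θ of the dihedral group G of order 16 such that both (G, χ) and (G, θ) are sharp of type L = {0, 2, 2 + √2, 2 − √2}, while ⟨χ, χ⟩_G = 5 and ⟨θ, θ⟩_G = 3. In particular, for sharp pairs that are not normalized, ⟨χ, χ⟩_G need not be determined by L even when L contains an irrational value. -/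
open CategoryTheory

open Complex

noncomputable section
namespace S6

def s : ℂ := (Real.sqrt 2 : ℝ)
def ζ : ℂ := (s / 2) * (1 + I)

lemma hs2 : s ^ 2 = 2 := by
  rw [s, ← Complex.ofReal_pow, Real.sq_sqrt (by norm_num)]; norm_num

lemma hI2 : I ^ 2 = -1 := Complex.I_sq

lemma hz2 : ζ ^ 2 = I := by
  rw [ζ]; linear_combination (I/2) * hs2 + (s^2/4) * hI2

lemma hz4 : ζ ^ 4 = -1 := by
  rw [show ζ^4 = (ζ^2)^2 by ring, hz2, hI2]

lemma hz8 : ζ ^ 8 = 1 := by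
  rw [show ζ^8 = (ζ^4)^2 by ring, hz4]; ring

lemma c1 : ζ ^ 1 + ζ ^ 7 = s := by
  have h7 : ζ^7 = -(I*ζ) := by
    rw [show ζ^7 = (ζ^2)^3 * ζ by ring, hz2, show I^3 = I^2*I by ring, hI2]; ring
  rw [h7, pow_one, ζ]; linear_combination (-(s/2)) * hI2

lemma c2 : ζ ^ 2 + ζ ^ 6 = 0 := by
  rw [show ζ^6 = (ζ^2)^3 by ring, hz2, show I^3 = I^2*I by ring, hI2]; ring

lemma c3 : ζ ^ 3 + ζ ^ 5 = -s := by
  have h3 : ζ^3 = I*ζ := by rw [show ζ^3 = ζ^2*ζ by ring, hz2]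
  have h5 : ζ^5 = -ζ := by rw [show ζ^5 = (ζ^2)^2*ζ by ring, hz2, hI2]; ring
  rw [h3, h5, ζ]; linear_combination (s/2) * hI2

def e (k : ZMod 8) : ℂ := ζ ^ k.val

lemma e_add (a b : ZMod 8) : e (a + b) = e a * e b := by
  rw [e, e, e, ← pow_add, ZMod.val_add]
  conv_rhs => rw [← Nat.mod_add_div (a.val + b.val) 8]
  rw [pow_add, pow_mul, hz8, one_pow, mul_one]

lemma e_zero : e (0 : ZMod 8) = 1 := by rw [e]; norm_num

lemma e_mul_neg (a : ZMod 8) : e a * e (-a) = 1 := by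
  rw [← e_add]; simp [e_zero]

def A (i : ZMod 8) : Matrix (Fin 4) (Fin 4) ℂ :=
  !![1,0,0,0; 0,1,0,0; 0,0,e i,0; 0,0,0,e (-i)]

def B (u : ℂ) (i : ZMod 8) : Matrix (Fin 4) (Fin 4) ℂ :=
  !![1,0,0,0; 0,u,0,0; 0,0,0,e (-i); 0,0,e i,0]

def M (u : ℂ) : DihedralGroup 8 → Matrix (Fin 4) (Fin 4) ℂ
  | .r i => A i
  | .sr i => B u i

lemma e_sub (a b : ZMod 8) : e (a - b) = e a * e (-b) := by
  rw [sub_eq_add_neg, e_add]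

lemma e_neg_add (a b : ZMod 8) : e (-(a+b)) = e (-a) * e (-b) := by
  rw [neg_add, e_add]

lemma e_neg_sub (a b : ZMod 8) : e (-(a-b)) = e (-a) * e b := by
  rw [neg_sub, e_sub]; ring

lemma A_mul_A (i j : ZMod 8) : A i * A j = A (i + j) := by
  ext a b
  fin_cases a <;> fin_cases b <;>
    simp [A, Matrix.mul_apply, Fin.sum_univ_four, e_add, e_neg_add, Matrix.vecHead,
      Matrix.vecTail] <;> ring

lemma A_mul_B (u : ℂ) (i j : ZMod 8) : A i * B u j = B u (j - i) := by
  ext a b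
  fin_cases a <;> fin_cases b <;>
    simp [A, B, Matrix.mul_apply, Fin.sum_univ_four, e_sub, e_neg_sub, Matrix.vecHead,
      Matrix.vecTail] <;> ring

lemma B_mul_A (u : ℂ) (i j : ZMod 8) : B u i * A j = B u (i + j) := by
  ext a b
  fin_cases a <;> fin_cases b <;>
    simp [A, B, Matrix.mul_apply, Fin.sum_univ_four, e_add, e_neg_add, Matrix.vecHead,
      Matrix.vecTail] <;> ring

lemma B_mul_B (u : ℂ) (hu : u * u = 1) (i j : ZMod 8) : B u i * B u j = A (j - i) := by
  ext a b
  fin_cases a <;> fin_cases b <;>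
    simp [A, B, Matrix.mul_apply, Fin.sum_univ_four, e_sub, e_neg_sub, hu, Matrix.vecHead,
      Matrix.vecTail] <;> ring

lemma A_zero : A 0 = 1 := by
  ext a b
  fin_cases a <;> fin_cases b <;>
    simp [A, e_zero, Matrix.one_apply, Matrix.vecHead, Matrix.vecTail]

def rep (u : ℂ) (hu : u * u = 1) : DihedralGroup 8 →* Matrix (Fin 4) (Fin 4) ℂ where
  toFun := M u
  map_one' := by rw [DihedralGroup.one_def]; show A 0 = 1; exact A_zero
  map_mul' x y := by
    cases x with
    | r i => cases y with
      | r j => show A (i+j) = A i * A j; rw [A_mul_A]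
      | sr j => show B u (j-i) = A i * B u j; rw [A_mul_B]
    | sr i => cases y with
      | r j => show B u (i+j) = B u i * A j; rw [B_mul_A]
      | sr j => show A (j-i) = B u i * B u j; rw [B_mul_B u hu]

def ρ (u : ℂ) (hu : u * u = 1) : Representation ℂ (DihedralGroup 8) (Fin 4 → ℂ) :=
  (Matrix.toLinAlgEquiv'.toRingEquiv.toMonoidHom).comp (rep u hu)

def V (u : ℂ) (hu : u * u = 1) : FDRep ℂ (DihedralGroup 8) := FDRep.of (ρ u hu)

lemma char_eq (u : ℂ) (hu : u * u = 1) (g : DihedralGroup 8) :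
    (V u hu).character g = (M u g).trace := by
  show LinearMap.trace ℂ _ (Matrix.toLinAlgEquiv' (rep u hu g)) = _
  rw [LinearMap.trace_eq_matrix_trace ℂ (Pi.basisFun ℂ (Fin 4)),
    LinearMap.toMatrix_eq_toMatrix']
  congr 1
  exact LinearMap.toMatrix'_toLin' _

lemma char_r (u : ℂ) (hu : u * u = 1) (i : ZMod 8) :
    (V u hu).character (.r i) = 2 + (e i + e (-i)) := by
  rw [char_eq]
  show (A i).trace = _
  simp [A, Matrix.trace, Fin.sum_univ_four, Matrix.diag, Matrix.vecHead, Matrix.vecTail]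
  ring

lemma char_sr (u : ℂ) (hu : u * u = 1) (j : ZMod 8) :
    (V u hu).character (.sr j) = 1 + u := by
  rw [char_eq]
  show (B u j).trace = _
  simp [B, Matrix.trace, Fin.sum_univ_four, Matrix.diag, Matrix.vecHead, Matrix.vecTail]

-- value table for e k + e (-k)
lemma ee0 : e (0 : ZMod 8) + e (-(0 : ZMod 8)) = 2 := by
  rw [neg_zero, e_zero]; norm_num
lemma ee1 : e (1 : ZMod 8) + e (-(1 : ZMod 8)) = s := by
  rw [e, e, show ((1 : ZMod 8)).val = 1 from by decide,
    show ((-(1 : ZMod 8))).val = 7 from by decide]; exact c1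
lemma ee2 : e (2 : ZMod 8) + e (-(2 : ZMod 8)) = 0 := by
  rw [e, e, show ((2 : ZMod 8)).val = 2 from by decide,
    show ((-(2 : ZMod 8))).val = 6 from by decide]; exact c2
lemma ee3 : e (3 : ZMod 8) + e (-(3 : ZMod 8)) = -s := by
  rw [e, e, show ((3 : ZMod 8)).val = 3 from by decide,
    show ((-(3 : ZMod 8))).val = 5 from by decide]; exact c3
lemma ee4 : e (4 : ZMod 8) + e (-(4 : ZMod 8)) = -2 := by
  rw [e, e, show ((4 : ZMod 8)).val = 4 from by decide,
    show ((-(4 : ZMod 8))).val = 4 from by decide, hz4]; norm_num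
lemma ee5 : e (5 : ZMod 8) + e (-(5 : ZMod 8)) = -s := by
  rw [e, e, show ((5 : ZMod 8)).val = 5 from by decide,
    show ((-(5 : ZMod 8))).val = 3 from by decide, add_comm]; exact c3
lemma ee6 : e (6 : ZMod 8) + e (-(6 : ZMod 8)) = 0 := by
  rw [e, e, show ((6 : ZMod 8)).val = 6 from by decide,
    show ((-(6 : ZMod 8))).val = 2 from by decide, add_comm]; exact c2
lemma ee7 : e (7 : ZMod 8) + e (-(7 : ZMod 8)) = s := by
  rw [e, e, show ((7 : ZMod 8)).val = 7 from by decide,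
    show ((-(7 : ZMod 8))).val = 1 from by decide, add_comm]; exact c1

lemma octo (i : ZMod 8) : i = 0 ∨ i = 1 ∨ i = 2 ∨ i = 3 ∨ i = 4 ∨ i = 5 ∨ i = 6 ∨ i = 7 := by
  revert i; decide

lemma sum_dg (f : DihedralGroup 8 → ℂ) :
    ∑ g, f g = (∑ i : ZMod 8, f (.r i)) + ∑ i : ZMod 8, f (.sr i) := by
  have hbij : Function.Bijective
      (Sum.elim DihedralGroup.r DihedralGroup.sr : ZMod 8 ⊕ ZMod 8 → DihedralGroup 8) := by
    constructor
    · intro a b h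
      cases a <;> cases b <;> simp_all
    · intro g
      cases g with
      | r i => exact ⟨.inl i, rfl⟩
      | sr i => exact ⟨.inr i, rfl⟩
  rw [← Fintype.sum_bijective _ hbij
      (fun x => f (Sum.elim DihedralGroup.r DihedralGroup.sr x)) f (fun x => rfl),
    Fintype.sum_sum_type]
  rfl

lemma sum_zmod8 (f : ZMod 8 → ℂ) :
    ∑ i : ZMod 8, f i = f 0 + f 1 + f 2 + f 3 + f 4 + f 5 + f 6 + f 7 := by
  have h : ∑ i : Fin 8, f i = _ := Fin.sum_univ_eight f
  rw [show (∑ i : ZMod 8, f i) = ∑ i : Fin 8, f i from rfl, h]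
  rfl

variable (u : ℂ) (hu : u * u = 1)

lemma charR0 : (V u hu).character (.r 0) = 4 := by rw [char_r, ee0]; norm_num
lemma charR1 : (V u hu).character (.r 1) = 2 + s := by rw [char_r, ee1]
lemma charR2 : (V u hu).character (.r 2) = 2 := by rw [char_r, ee2]; norm_num
lemma charR3 : (V u hu).character (.r 3) = 2 - s := by rw [char_r, ee3]; ring
lemma charR4 : (V u hu).character (.r 4) = 0 := by rw [char_r, ee4]; norm_num
lemma charR5 : (V u hu).character (.r 5) = 2 - s := by rw [char_r, ee5]; ring
lemma charR6 : (V u hu).character (.r 6) = 2 := by rw [char_r, ee6]; norm_num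
lemma charR7 : (V u hu).character (.r 7) = 2 + s := by rw [char_r, ee7]

lemma hs0 : s ≠ 0 := by
  rw [s]
  exact_mod_cast Real.sqrt_ne_zero'.mpr (by norm_num)

lemma hslt : Real.sqrt 2 < 2 := by
  nlinarith [Real.sq_sqrt (show (0:ℝ) ≤ 2 by norm_num), Real.sqrt_nonneg 2]

lemma hspos : 0 < Real.sqrt 2 := Real.sqrt_pos.mpr (by norm_num)

lemma h0p : (0:ℂ) ≠ 2 + s := by
  rw [s]; intro h
  have : (0:ℝ) = 2 + Real.sqrt 2 := by exact_mod_cast h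
  nlinarith [hspos]

lemma h0m : (0:ℂ) ≠ 2 - s := by
  rw [s]; intro h
  have : (0:ℝ) = 2 - Real.sqrt 2 := by exact_mod_cast h
  nlinarith [hslt]

lemma h2p : (2:ℂ) ≠ 2 + s := by
  rw [s]; intro h
  have : (2:ℝ) = 2 + Real.sqrt 2 := by exact_mod_cast h
  nlinarith [hspos]

lemma h2m : (2:ℂ) ≠ 2 - s := by
  rw [s]; intro h
  have : (2:ℝ) = 2 - Real.sqrt 2 := by exact_mod_cast h
  nlinarith [hspos]

lemma hpm : (2 + s : ℂ) ≠ 2 - s := by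
  rw [s]; intro h
  have : (2 + Real.sqrt 2 : ℝ) = 2 - Real.sqrt 2 := by exact_mod_cast h
  nlinarith [hspos]

lemma sharp_of (hm : (1 : ℂ) + u = 2 ∨ (1 : ℂ) + u = 0) :
    IsSharp (DihedralGroup 8) (V u hu).character
      {0, 2, 2 + (Real.sqrt 2 : ℂ), 2 - (Real.sqrt 2 : ℂ)} := by
  have hsdef : ((Real.sqrt 2 : ℝ) : ℂ) = s := rfl
  rw [hsdef]
  constructor
  · ext z
    simp only [Finset.coe_insert, Set.mem_insert_iff, Finset.coe_singleton,
      Set.mem_singleton_iff, Set.mem_setOf_eq]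
    constructor
    · rintro (rfl | rfl | rfl | rfl)
      · exact ⟨.r 4, by decide, charR4 u hu⟩
      · exact ⟨.r 2, by decide, charR2 u hu⟩
      · exact ⟨.r 1, by decide, charR1 u hu⟩
      · exact ⟨.r 3, by decide, charR3 u hu⟩
    · rintro ⟨g, hg, rfl⟩
      cases g with
      | r i =>
        rcases octo i with rfl|rfl|rfl|rfl|rfl|rfl|rfl|rfl
        · exact absurd (DihedralGroup.one_def).symm hg
        · exact Or.inr (Or.inr (Or.inl (charR1 u hu)))
        · exact Or.inr (Or.inl (charR2 u hu))
        · exact Or.inr (Or.inr (Or.inr (charR3 u hu)))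
        · exact Or.inl (charR4 u hu)
        · exact Or.inr (Or.inr (Or.inr (charR5 u hu)))
        · exact Or.inr (Or.inl (charR6 u hu))
        · exact Or.inr (Or.inr (Or.inl (charR7 u hu)))
      | sr j =>
        rw [char_sr]
        rcases hm with h | h
        · exact Or.inr (Or.inl h)
        · exact Or.inl h
  · have h1 : (V u hu).character 1 = 4 := by
      rw [show (1 : DihedralGroup 8) = .r 0 from DihedralGroup.one_def, charR0]
    have m0 : (0:ℂ) ∉ ({2, 2 + s, 2 - s} : Finset ℂ) := by
      simp only [Finset.mem_insert, Finset.mem_singleton]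
      push_neg
      exact ⟨by norm_num, h0p, h0m⟩
    have m2 : (2:ℂ) ∉ ({2 + s, 2 - s} : Finset ℂ) := by
      simp only [Finset.mem_insert, Finset.mem_singleton]
      push_neg
      exact ⟨h2p, h2m⟩
    have mp : (2 + s : ℂ) ∉ ({2 - s} : Finset ℂ) := by
      simp only [Finset.mem_singleton]
      exact hpm
    rw [h1, Finset.prod_insert m0, Finset.prod_insert m2, Finset.prod_insert mp,
      Finset.prod_singleton, DihedralGroup.card]
    push_cast
    linear_combination (-8 : ℂ) * hs2

lemma hconjs : (starRingEnd ℂ) s = s := by rw [s]; exact Complex.conj_ofReal _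


end S6

open S6 in
/-- the dihedral group `G` of order 16 has characters `χ`, `θ`, both sharp of
type `L = {0, 2, 2 + √2, 2 − √2}`, with `⟨χ,χ⟩ = 5` and `⟨θ,θ⟩ = 3`. -/
theorem stmt6 : ∃ χ θ : DihedralGroup 8 → ℂ,
    IsChar (DihedralGroup 8) χ ∧ IsChar (DihedralGroup 8) θ ∧
    IsSharp (DihedralGroup 8) χ
      {0, 2, 2 + (Real.sqrt 2 : ℂ), 2 - (Real.sqrt 2 : ℂ)} ∧
    IsSharp (DihedralGroup 8) θ
      {0, 2, 2 + (Real.sqrt 2 : ℂ), 2 - (Real.sqrt 2 : ℂ)} ∧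
    charInner (DihedralGroup 8) χ χ = 5 ∧ charInner (DihedralGroup 8) θ θ = 3 := by
  have hu1 : (1 : ℂ) * 1 = 1 := by norm_num
  have hu2 : (-1 : ℂ) * (-1) = 1 := by norm_num
  refine ⟨(V 1 hu1).character, (V (-1) hu2).character, ⟨V 1 hu1, fun g => rfl⟩,
    ⟨V (-1) hu2, fun g => rfl⟩,
    sharp_of 1 hu1 (Or.inl (by norm_num)), sharp_of (-1) hu2 (Or.inr (by norm_num)), ?_, ?_⟩
  · rw [charInner, DihedralGroup.card, sum_dg, sum_zmod8, sum_zmod8]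
    simp only [charR0 1 hu1, charR1 1 hu1, charR2 1 hu1, charR3 1 hu1, charR4 1 hu1,
      charR5 1 hu1, charR6 1 hu1, charR7 1 hu1, char_sr 1 hu1]
    simp only [map_add, map_sub, map_ofNat, map_zero, map_one, hconjs]
    push_cast
    rw [inv_mul_eq_div, div_eq_iff (by norm_num)]
    ring_nf
    linear_combination (4 : ℂ) * hs2
  · rw [charInner, DihedralGroup.card, sum_dg, sum_zmod8, sum_zmod8]
    simp only [charR0 (-1) hu2, charR1 (-1) hu2, charR2 (-1) hu2, charR3 (-1) hu2,
      charR4 (-1) hu2, charR5 (-1) hu2, charR6 (-1) hu2, charR7 (-1) hu2, char_sr (-1) hu2]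
    simp only [map_add, map_sub, map_ofNat, map_zero, map_one, hconjs]
    push_cast
    rw [inv_mul_eq_div, div_eq_iff (by norm_num)]
    ring_nf
    linear_combination (4 : ℂ) * hs2
end
end

section
/- Let G be a cyclic group of order m, where m ≥ 5 is odd, and let λ be a faithful linear character of G. Then the character λ + λ̄ (the sum of λ and its complex conjugate) is faithful and (G, λ + λ̄) is sharp of type L = {ω^r + ω^{−r} : 1 ≤ r ≤ (m−1)/2}, where ω = e^{2πi/m}. -/
open CategoryTheory

/-- Product of `1 - ω^r` over nontrivial powers of a primitive `m`-th root is `m`. -/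
lemma prod_one_sub_primroot {m : ℕ} (hpos : 0 < m) {ω : ℂ} (hprim : IsPrimitiveRoot ω m) :
    ∏ r ∈ Finset.Ioc 0 (m - 1), (1 - ω ^ r) = (m : ℂ) := by
  open Polynomial Finset in
  have h1 : (1 : ℂ) ∈ nthRootsFinset m (1 : ℂ) := Polynomial.one_mem_nthRootsFinset hpos
  have hpoly : ∏ μ ∈ (nthRootsFinset m (1 : ℂ)).erase 1, (X - C μ) =
      ∑ i ∈ range m, (X : ℂ[X]) ^ i := by
    have hXne : (X : ℂ[X]) - C 1 ≠ 0 := X_sub_C_ne_zero 1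
    apply mul_left_cancel₀ hXne
    rw [Finset.mul_prod_erase _ (fun μ => (X:ℂ[X]) - C μ) h1,
      ← X_pow_sub_one_eq_prod hpos hprim]
    rw [mul_comm, map_one, geom_sum_mul]
  have heval := congrArg (Polynomial.eval (1 : ℂ)) hpoly
  simp only [Polynomial.eval_prod, Polynomial.eval_sub, Polynomial.eval_X, Polynomial.eval_C,
    Polynomial.eval_finset_sum, Polynomial.eval_pow, one_pow,
    Finset.sum_const, Finset.card_range, nsmul_eq_mul, mul_one] at heval
  rw [← heval]
  refine Finset.prod_nbij (fun r => ω ^ r) ?_ ?_ ?_ (fun r _ => rfl)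
  · intro r hr
    simp only [Finset.mem_Ioc] at hr
    have hrm : r < m := lt_of_le_of_lt hr.2 (by omega)
    refine Finset.mem_erase.2 ⟨hprim.pow_ne_one_of_pos_of_lt hr.1.ne' hrm, ?_⟩
    rw [Polynomial.mem_nthRootsFinset hpos (1 : ℂ), ← pow_mul, mul_comm, pow_mul, hprim.pow_eq_one,
      one_pow]
  · intro r hr s hs h
    simp only [Set.mem_setOf_eq, Finset.coe_Ioc, Set.mem_Ioc] at hr hs
    exact hprim.pow_inj (by omega) (by omega) h
  · intro μ hμ
    simp only [Finset.coe_erase, Set.mem_diff, Finset.mem_coe] at hμ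
    obtain ⟨hμm, hμ1⟩ := hμ
    have : NeZero m := ⟨hpos.ne'⟩
    obtain ⟨r, hrm, hr⟩ := hprim.eq_pow_of_pow_eq_one
      ((Polynomial.mem_nthRootsFinset hpos (1 : ℂ)).1 hμm)
    refine ⟨r, ?_, hr⟩
    have hr0 : r ≠ 0 := by
      rintro rfl; exact (hμ1 (by simpa using hr.symm)).elim
    simp only [Set.mem_setOf_eq, Finset.coe_Ioc, Set.mem_Ioc]
    omega

/-- if `G` is cyclic of order `m`, `m ≥ 5` odd, and `λ` is a faithful linear
character of `G`, then `λ + λ̄` is faithful and `(G, λ + λ̄)` is sharp of type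
`L = {ω^r + ω^{−r} : 1 ≤ r ≤ (m−1)/2}`, `ω = e^{2πi/m}`. -/
theorem stmt8 (m : ℕ) (hm : 5 ≤ m) (hodd : Odd m) (G : Type) [Group G] [Fintype G]
    (hcyc : IsCyclic G) (hcard : Fintype.card G = m)
    (lam : G →* ℂˣ) (hfaith : Function.Injective lam) :
    (∀ g : G, ((lam g : ℂˣ) : ℂ) + (starRingEnd ℂ) ((lam g : ℂˣ) : ℂ)
        = ((lam 1 : ℂˣ) : ℂ) + (starRingEnd ℂ) ((lam 1 : ℂˣ) : ℂ) → g = 1) ∧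
    IsSharp G (fun g => ((lam g : ℂˣ) : ℂ) + (starRingEnd ℂ) ((lam g : ℂˣ) : ℂ))
      ((Finset.Icc 1 ((m - 1) / 2)).image
        (fun r : ℕ => Complex.exp (2 * Real.pi * Complex.I / m) ^ (r : ℤ) +
          Complex.exp (2 * Real.pi * Complex.I / m) ^ (-(r : ℤ)))) := by
  classical
  obtain ⟨k0, hk0⟩ := hodd
  have hpos : 0 < m := by omega
  have hNZ : NeZero m := ⟨hpos.ne'⟩
  set k := (m - 1) / 2 with hkdef
  have hk : m = 2 * k + 1 := by omega
  set ω := Complex.exp (2 * Real.pi * Complex.I / m) with hωdef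
  have hprim : IsPrimitiveRoot ω m := Complex.isPrimitiveRoot_exp m hpos.ne'
  have hωne : ω ≠ 0 := Complex.exp_ne_zero _
  set f : ℕ → ℂ := fun r => ω ^ (r : ℤ) + ω ^ (-(r : ℤ)) with hfdef
  have hfr : ∀ r : ℕ, f r = ω ^ r + (ω ^ r)⁻¹ := by
    intro r; simp [hfdef, zpow_neg, zpow_natCast]
  have hlm : ∀ g : G, ((lam g : ℂˣ) : ℂ) ^ m = 1 := by
    intro g
    have h : (lam g) ^ m = 1 := by
      rw [← map_pow, ← hcard, pow_card_eq_one, map_one]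
    have := congrArg (fun u : ℂˣ => (u : ℂ)) h
    simpa using this
  have hne0 : ∀ g : G, ((lam g : ℂˣ) : ℂ) ≠ 0 := fun g => Units.ne_zero _
  have hconj : ∀ g : G, (starRingEnd ℂ) ((lam g : ℂˣ) : ℂ) = ((lam g : ℂˣ) : ℂ)⁻¹ := by
    intro g
    rw [← Complex.inv_eq_conj (Complex.norm_eq_one_of_pow_eq_one (hlm g) hpos.ne')]
  have hlam1 : ((lam 1 : ℂˣ) : ℂ) = 1 := by rw [map_one, Units.val_one]
  have hpow_mem : ∀ r : ℕ, (ω ^ r) ^ m = 1 := by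
    intro r; rw [← pow_mul, mul_comm, pow_mul, hprim.pow_eq_one, one_pow]
  -- faithfulness
  have hfaithful : ∀ g : G, ((lam g : ℂˣ) : ℂ) + (starRingEnd ℂ) ((lam g : ℂˣ) : ℂ)
      = ((lam 1 : ℂˣ) : ℂ) + (starRingEnd ℂ) ((lam 1 : ℂˣ) : ℂ) → g = 1 := by
    intro g hg
    rw [hconj g, hlam1, map_one] at hg
    set z := ((lam g : ℂˣ) : ℂ) with hz
    have hzne : z ≠ 0 := hne0 g
    have hg2 : z * z + 1 = 2 * z := by
      have := congrArg (· * z) hg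
      field_simp at this
      linear_combination this
    have h3 : (z - 1) ^ 2 = 0 := by linear_combination hg2
    have hz1 : z = 1 := by
      have := pow_eq_zero_iff (n := 2) (by norm_num) |>.1 h3
      linear_combination this
    apply hfaith
    rw [map_one]
    exact Units.ext (by rw [← hz, hz1, Units.val_one])
  -- surjectivity of lam onto m-th roots of unity
  have hsurj : ∀ z : ℂ, z ^ m = 1 → ∃ g : G, ((lam g : ℂˣ) : ℂ) = z := by
    intro z hz
    have hinj : Function.Injective (fun g : G => ((lam g : ℂˣ) : ℂ)) :=
      fun a b h => hfaith (Units.ext h)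
    have hsub : Finset.univ.image (fun g : G => ((lam g : ℂˣ) : ℂ)) ⊆
        Polynomial.nthRootsFinset m (1 : ℂ) := by
      intro x hx
      simp only [Finset.mem_image] at hx
      obtain ⟨g, _, rfl⟩ := hx
      exact (Polynomial.mem_nthRootsFinset hpos (1 : ℂ)).2 (hlm g)
    have hcards : (Polynomial.nthRootsFinset m (1 : ℂ)).card ≤
        (Finset.univ.image (fun g : G => ((lam g : ℂˣ) : ℂ))).card := by
      rw [Finset.card_image_of_injective _ hinj, Finset.card_univ, hcard,
        hprim.card_nthRootsFinset]
    have heq := Finset.eq_of_subset_of_card_le hsub hcards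
    have hzmem : z ∈ Finset.univ.image (fun g : G => ((lam g : ℂˣ) : ℂ)) := by
      rw [heq]; exact (Polynomial.mem_nthRootsFinset hpos (1 : ℂ)).2 hz
    simpa using hzmem
  refine ⟨hfaithful, ?_, ?_⟩
  · -- set equality
    ext z
    simp only [Finset.coe_image, Finset.coe_Icc, Set.mem_image, Set.mem_Icc, Set.mem_setOf_eq]
    constructor
    · rintro ⟨r, ⟨hr1, hrk⟩, rfl⟩
      obtain ⟨g, hg⟩ := hsurj (ω ^ r) (hpow_mem r)
      refine ⟨g, ?_, ?_⟩
      · intro h1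
        exact hprim.pow_ne_one_of_pos_of_lt (l := r) (by omega) (by omega) (by rw [← hg, h1, hlam1])
      · rw [hconj g, hg, hfr r]
    · rintro ⟨g, hg1, rfl⟩
      obtain ⟨r, hrm, hr⟩ := hprim.eq_pow_of_pow_eq_one (hlm g)
      have hr0 : r ≠ 0 := by
        rintro rfl
        exact hg1 (hfaith (by rw [map_one]; exact Units.ext (by rw [← hr, pow_zero, Units.val_one])))
      have hval : ((lam g : ℂˣ) : ℂ) + (starRingEnd ℂ) ((lam g : ℂˣ) : ℂ)
          = ω ^ r + (ω ^ r)⁻¹ := by rw [hconj g, ← hr]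
      by_cases hcase : r ≤ k
      · exact ⟨r, ⟨by omega, hcase⟩, by rw [hfr r, ← hval]⟩
      · refine ⟨m - r, ⟨by omega, by omega⟩, ?_⟩
        have h1 : ω ^ (m - r) = (ω ^ r)⁻¹ := by
          refine eq_inv_of_mul_eq_one_left ?_
          rw [← pow_add, Nat.sub_add_cancel hrm.le, hprim.pow_eq_one]
        rw [hfr (m - r), h1, inv_inv, hval, add_comm]
  · -- product
    have hchi1 : ((lam 1 : ℂˣ) : ℂ) + (starRingEnd ℂ) ((lam 1 : ℂˣ) : ℂ) = 2 := by
      rw [hlam1, map_one]; norm_num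
    simp only [hchi1, hcard]
    have hinjf : ∀ r ∈ Finset.Icc 1 k, ∀ s ∈ Finset.Icc 1 k, f r = f s → r = s := by
      intro r hr s hs h
      simp only [Finset.mem_Icc] at hr hs
      rw [hfr r, hfr s] at h
      have hxne : ω ^ r ≠ 0 := pow_ne_zero _ hωne
      have hyne : ω ^ s ≠ 0 := pow_ne_zero _ hωne
      have hkey : (ω ^ r - ω ^ s) * (ω ^ r * ω ^ s - 1) = 0 := by
        field_simp at h
        linear_combination h
      rcases mul_eq_zero.1 hkey with h3 | h3
      · exact hprim.pow_inj (by omega) (by omega) (by linear_combination h3)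
      · exfalso
        have h4 : ω ^ (r + s) = 1 := by rw [pow_add]; linear_combination h3
        exact hprim.pow_ne_one_of_pos_of_lt (by omega) (by omega) h4
    rw [Finset.prod_image hinjf]
    have step : ∀ r ∈ Finset.Icc 1 k, (2 : ℂ) - f r = (1 - ω ^ r) * (1 - ω ^ (m - r)) := by
      intro r hr
      simp only [Finset.mem_Icc] at hr
      have h1 : ω ^ (m - r) = (ω ^ r)⁻¹ := by
        refine eq_inv_of_mul_eq_one_left ?_
        rw [← pow_add, Nat.sub_add_cancel (by omega), hprim.pow_eq_one]
      rw [hfr r, h1]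
      have hxne : ω ^ r ≠ 0 := pow_ne_zero _ hωne
      field_simp
      ring
    rw [Finset.prod_congr rfl step, Finset.prod_mul_distrib]
    have hre : ∏ r ∈ Finset.Icc 1 k, (1 - ω ^ (m - r)) =
        ∏ r ∈ Finset.Ioc k (m - 1), (1 - ω ^ r) := by
      refine Finset.prod_nbij (fun r => m - r) ?_ ?_ ?_ (fun r _ => rfl)
      · intro r hr
        simp only [Finset.mem_Icc] at hr
        simp only [Finset.mem_coe, Finset.mem_Ioc]
        omega
      · intro r hr s hs h
        simp only [Set.mem_setOf_eq, Finset.coe_Icc, Set.mem_Icc] at hr hs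
        simp only at h
        omega
      · intro s hs
        simp only [Finset.coe_Ioc, Set.mem_Ioc] at hs
        refine ⟨m - s, ?_, ?_⟩
        · simp only [Finset.coe_Icc, Set.mem_Icc, Set.mem_setOf_eq]
          omega
        · simp only
          omega
    have hIoc : Finset.Icc 1 k = Finset.Ioc 0 k := by rw [← Finset.Icc_add_one_left_eq_Ioc]; rfl
    rw [hre, hIoc,
      Finset.prod_Ioc_consecutive _ (Nat.zero_le k) (by omega : k ≤ m - 1)]
    exact prod_one_sub_primroot hpos hprim
end

section
/- Let m be a positive integer divisible by 4 and let ψ be a faithful irreducible character of degree 2 of the dihedral group D_{2m} of order 2m. Then (D_{2m}, ψ) is sharp of type L = {−2, 0} ∪ {ω^r + ω^{−r} : 1 ≤ r ≤ m/2 − 1}, where ω = e^{2πi/m}. -/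
open CategoryTheory Polynomial

section Helpers

private lemma ch2 (A : Matrix (Fin 2) (Fin 2) ℂ) :
    A * A = A.trace • A - A.det • (1 : Matrix (Fin 2) (Fin 2) ℂ) := by
  ext i j
  fin_cases i <;> fin_cases j <;>
    simp [Matrix.mul_apply, Fin.sum_univ_two, Matrix.trace_fin_two, Matrix.det_fin_two,
      Matrix.one_apply] <;> ring

private lemma trace_pow_eq (A : Matrix (Fin 2) (Fin 2) ℂ) (z w : ℂ)
    (h1 : z + w = A.trace) (h2 : z * w = A.det) :
    ∀ j : ℕ, (A ^ j).trace = z ^ j + w ^ j := by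
  have key : ∀ j : ℕ, (A ^ j).trace = z ^ j + w ^ j ∧
      (A ^ (j+1)).trace = z ^ (j+1) + w ^ (j+1) := by
    intro j
    induction j with
    | zero =>
      constructor
      · simp [Matrix.trace_one]; norm_num
      · simpa using h1.symm
    | succ n ih =>
      refine ⟨ih.2, ?_⟩
      have hA2 : A ^ (n+2) = A.trace • A ^ (n+1) - A.det • A ^ n := by
        have h : A ^ (n+2) = A ^ n * (A * A) := by
          rw [pow_add, sq]
        rw [h, ch2, mul_sub, mul_smul_comm, mul_smul_comm, mul_one, ← pow_succ]
      rw [hA2, Matrix.trace_sub, Matrix.trace_smul, Matrix.trace_smul, ih.1, ih.2,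
        ← h1, ← h2]
      simp only [smul_eq_mul]
      ring
  exact fun j => (key j).1

private lemma root_pow_one (A : Matrix (Fin 2) (Fin 2) ℂ) (z : ℂ)
    (hz : z * z - A.trace * z + A.det = 0) (k : ℕ) (hA : A ^ k = 1) : z ^ k = 1 := by
  have hdet : (A - z • 1).det = 0 := by
    rw [Matrix.trace_fin_two, Matrix.det_fin_two A] at hz
    rw [Matrix.det_fin_two]
    simp only [Matrix.sub_apply, Matrix.smul_apply, Matrix.one_apply, smul_eq_mul]
    norm_num
    linear_combination hz
  obtain ⟨v, hv0, hv⟩ := (Matrix.exists_mulVec_eq_zero_iff.mpr hdet)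
  have hAv : A.mulVec v = z • v := by
    have h := hv
    rw [Matrix.sub_mulVec, sub_eq_zero] at h
    rw [h, Matrix.smul_mulVec, Matrix.one_mulVec]
  have hpow : ∀ n : ℕ, (A ^ n).mulVec v = z ^ n • v := by
    intro n
    induction n with
    | zero => simp
    | succ p ih =>
      rw [pow_succ, ← Matrix.mulVec_mulVec, hAv, Matrix.mulVec_smul, ih, smul_smul, pow_succ]
      rw [mul_comm]
  have hk := hpow k
  rw [hA, Matrix.one_mulVec] at hk
  by_contra hne
  have h0 : (z ^ k - 1) • v = 0 := by rw [sub_smul, ← hk, one_smul, sub_self]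
  rcases smul_eq_zero.mp h0 with h | h
  · exact hne (sub_eq_zero.mp h)
  · exact hv0 h

private lemma pow_eq_one_of_roots (A : Matrix (Fin 2) (Fin 2) ℂ) (z w : ℂ) (hzw : z ≠ w)
    (h1 : z + w = A.trace) (h2 : z * w = A.det) (d : ℕ)
    (hz : z ^ d = 1) (hw : w ^ d = 1) : A ^ d = 1 := by
  have hcop : IsCoprime (X - C z) (X - C w) := by
    refine ⟨C (w - z)⁻¹, -C (w - z)⁻¹, ?_⟩
    have hwz : w - z ≠ 0 := sub_ne_zero.mpr (Ne.symm hzw)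
    have hring : C (w - z)⁻¹ * (X - C z) + -C (w - z)⁻¹ * (X - C w)
        = C (w - z)⁻¹ * (C w - C z) := by ring
    rw [hring, ← C_sub, ← C_mul, inv_mul_cancel₀ hwz, C_1]
  have hdvd : (X - C z) * (X - C w) ∣ (X ^ d - 1 : ℂ[X]) := by
    apply hcop.mul_dvd
    · rw [Polynomial.dvd_iff_isRoot]; simp [Polynomial.IsRoot, hz]
    · rw [Polynomial.dvd_iff_isRoot]; simp [Polynomial.IsRoot, hw]
  obtain ⟨q, hq⟩ := hdvd
  have heval := congrArg (Polynomial.aeval A) hq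
  simp only [map_sub, _root_.map_mul, map_pow, aeval_X, aeval_one, _root_.map_one,
    aeval_C] at heval
  have hCH : (A - algebraMap ℂ _ z) * (A - algebraMap ℂ _ w) = 0 := by
    have hsmul : ∀ c : ℂ, algebraMap ℂ (Matrix (Fin 2) (Fin 2) ℂ) c = c • 1 :=
      fun c => Algebra.algebraMap_eq_smul_one c
    rw [hsmul, hsmul]
    simp only [sub_mul, mul_sub, smul_mul_assoc, mul_smul_comm, one_mul, mul_one, smul_smul]
    rw [ch2, ← h1, ← h2]
    module
  rw [hCH, zero_mul] at heval
  exact sub_eq_zero.mp heval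

private lemma geom_zero {τ : ℂ} (m : ℕ) (hτ : τ ^ m = 1) (hne : τ ≠ 1) :
    ∑ k ∈ Finset.range m, τ ^ k = 0 := by
  have h := geom_sum_mul τ m
  rw [hτ, sub_self] at h
  rcases mul_eq_zero.mp h with h' | h'
  · exact h'
  · exact absurd (sub_eq_zero.mp h') hne

private lemma zmod_sum (m : ℕ) [NeZero m] (f : ℕ → ℂ) :
    ∑ i : ZMod m, f i.val = ∑ k ∈ Finset.range m, f k := by
  apply Finset.sum_nbij' (fun i : ZMod m => i.val) (fun k : ℕ => (k : ZMod m))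
  · intro i _; exact Finset.mem_range.mpr (ZMod.val_lt i)
  · intro k _; exact Finset.mem_univ _
  · intro i _
    exact ZMod.natCast_zmod_val i
  · intro k hk; exact ZMod.val_cast_of_lt (Finset.mem_range.mp hk)
  · intro i _; rfl

private lemma exists_roots (t d : ℂ) : ∃ z w : ℂ, z + w = t ∧ z * w = d ∧
    z * z - t * z + d = 0 ∧ w * w - t * w + d = 0 := by
  obtain ⟨s, hs⟩ := IsAlgClosed.exists_pow_nat_eq (t ^ 2 / 4 - d) (zero_lt_two : (0:ℕ) < 2)
  exact ⟨t / 2 + s, t / 2 - s, by ring, by linear_combination -hs,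
    by linear_combination hs, by linear_combination hs⟩

private lemma prod_one_sub (m : ℕ) (hm : 0 < m) {ω : ℂ} (hω : IsPrimitiveRoot ω m) :
    ∏ k ∈ Finset.Ico 1 m, (1 - ω ^ k) = m := by
  haveI : NeZero m := ⟨hm.ne'⟩
  have h2 : ∏ k ∈ Finset.range m, ((X : ℂ[X]) - C (ω ^ k))
      = ∏ ζ ∈ Polynomial.nthRootsFinset m (1 : ℂ), (X - C ζ) := by
    apply Finset.prod_nbij (fun k => ω ^ k)
    · intro k _
      exact (Polynomial.mem_nthRootsFinset hm 1).mpr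
        (by rw [← pow_mul, mul_comm, pow_mul, hω.pow_eq_one, one_pow])
    · intro a ha b hb hab
      exact hω.pow_inj (Finset.mem_range.mp ha) (Finset.mem_range.mp hb) hab
    · intro ζ hζ
      obtain ⟨k, hk, hkζ⟩ := hω.eq_pow_of_pow_eq_one ((Polynomial.mem_nthRootsFinset hm 1).mp hζ)
      exact ⟨k, Finset.mem_coe.mpr (Finset.mem_range.mpr hk), hkζ⟩
    · intro k _; rfl
  rw [← X_pow_sub_one_eq_prod hm hω] at h2
  have h1 : ((X : ℂ[X]) - C (ω ^ 0)) * ∏ k ∈ Finset.Ico 1 m, (X - C (ω ^ k))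
      = ∏ k ∈ Finset.range m, (X - C (ω ^ k)) := by
    rw [Finset.range_eq_Ico, Finset.prod_eq_prod_Ico_succ_bot hm]
  have h3 : ((X : ℂ[X]) - 1) * (∑ k ∈ Finset.range m, X ^ k) = X ^ m - 1 := by
    have := geom_sum_mul (X : ℂ[X]) m
    linear_combination this
  have hX1 : ((X : ℂ[X]) - 1) ≠ 0 := Polynomial.X_sub_C_ne_zero 1
  have hc : ∏ k ∈ Finset.Ico 1 m, ((X : ℂ[X]) - C (ω ^ k)) = ∑ k ∈ Finset.range m, X ^ k := by
    apply mul_left_cancel₀ hX1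
    rw [h3]
    rw [← h2, ← h1]
    norm_num
  have he := congrArg (Polynomial.eval 1) hc
  simp only [Polynomial.eval_prod, Polynomial.eval_sub, Polynomial.eval_X, Polynomial.eval_C,
    Polynomial.eval_finset_sum, Polynomial.eval_pow, Polynomial.eval_one, one_pow,
    Finset.sum_const, Finset.card_range, nsmul_eq_mul, mul_one] at he
  exact he

private lemma xinv_cases (x y : ℂ) (hx : x ≠ 0) (hy : y ≠ 0) (h : x + x⁻¹ = y + y⁻¹) :
    x = y ∨ x * y = 1 := by
  have h2 : (x - y) * (x * y - 1) = 0 := by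
    field_simp at h
    linear_combination h
  rcases mul_eq_zero.mp h2 with h' | h'
  · exact Or.inl (sub_eq_zero.mp h')
  · exact Or.inr (sub_eq_zero.mp h')

private lemma neg_one_of_sq {x : ℂ} (hx2 : x ^ 2 = 1) (hx1 : x ≠ 1) : x = -1 := by
  have h : (x - 1) * (x + 1) = 0 := by linear_combination hx2
  rcases mul_eq_zero.mp h with h' | h'
  · exact absurd (sub_eq_zero.mp h') hx1
  · exact eq_neg_of_add_eq_zero_left h'

end Helpers

/-- for `m` divisible by 4 and a faithful irreducible character `ψ` of
degree 2 of the dihedral group `D_{2m}`, `(D_{2m}, ψ)` is sharp of type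
`L = {−2, 0} ∪ {ω^r + ω^{−r} : 1 ≤ r ≤ m/2 − 1}`, `ω = e^{2πi/m}`. -/
theorem stmt12 (m : ℕ) (hm : 0 < m) (hdiv : 4 ∣ m) [NeZero m]
    (V : FDRep ℂ (DihedralGroup m)) [Simple V]
    (hfaith : Function.Injective V.ρ) (hdeg : V.character 1 = 2) :
    IsSharp (DihedralGroup m) V.character
      (insert (-2) (insert 0 ((Finset.Icc 1 (m / 2 - 1)).image
        (fun r : ℕ => Complex.exp (2 * Real.pi * Complex.I / m) ^ (r : ℤ) +
          Complex.exp (2 * Real.pi * Complex.I / m) ^ (-(r : ℤ)))))) := by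
  classical
  have hm4 : 4 ≤ m := Nat.le_of_dvd hm hdiv
  have hm2 : 2 * (m / 2) = m := by omega
  have hm44 : 4 * (m / 4) = m := by omega
  -- matrix model
  have hfr : Module.finrank ℂ V = 2 := by
    have h := FDRep.char_one V
    rw [hdeg] at h
    exact_mod_cast h.symm
  let b : Module.Basis (Fin 2) ℂ V := Module.finBasisOfFinrankEq ℂ V hfr
  set M : DihedralGroup m → Matrix (Fin 2) (Fin 2) ℂ :=
    fun g => LinearMap.toMatrix b b (V.ρ g) with hMdef
  have hM1 : M 1 = 1 := by simp [hMdef, LinearMap.toMatrix_one]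
  have hMmul : ∀ g h : DihedralGroup m, M (g * h) = M g * M h := by
    intro g h
    simp [hMdef, map_mul, LinearMap.toMatrix_mul]
  have hMpow : ∀ (g : DihedralGroup m) (k : ℕ), M (g ^ k) = M g ^ k := by
    intro g k
    induction k with
    | zero => simpa using hM1
    | succ p ih => rw [pow_succ, pow_succ, ← ih, ← hMmul]
  have htr : ∀ g, V.character g = (M g).trace := fun g =>
    LinearMap.trace_eq_matrix_trace ℂ b _
  have hMinj : Function.Injective M := by
    intro g h hgh
    exact hfaith ((LinearMap.toMatrix b b).injective hgh)
  -- the rotation matrix and its eigenvalues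
  set A := M (DihedralGroup.r 1) with hAdef
  have hAm : A ^ m = 1 := by
    rw [← hMpow, DihedralGroup.r_one_pow, ← hM1]
    rw [ZMod.natCast_self, ← DihedralGroup.one_def]
  obtain ⟨z, w, hzw_sum, hzw_prod, hzq, hwq⟩ := exists_roots A.trace A.det
  have hzm : z ^ m = 1 := root_pow_one A z hzq m hAm
  have hwm : w ^ m = 1 := root_pow_one A w hwq m hAm
  have hz0 : z ≠ 0 := by
    intro h; rw [h, zero_pow hm.ne'] at hzm; exact zero_ne_one hzm
  have hw0 : w ≠ 0 := by
    intro h; rw [h, zero_pow hm.ne'] at hwm; exact zero_ne_one hwm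
  -- character values on rotations
  have hr_pow : ∀ j : ZMod m,
      DihedralGroup.r j = (DihedralGroup.r 1 : DihedralGroup m) ^ j.val := by
    intro j
    rw [DihedralGroup.r_one_pow, ZMod.natCast_zmod_val]
  have hχr : ∀ j : ZMod m, V.character (DihedralGroup.r j) = z ^ j.val + w ^ j.val := by
    intro j
    rw [htr, hr_pow, hMpow, ← hAdef, trace_pow_eq A z w hzw_sum hzw_prod]
  -- inverses
  have hinv_r : ∀ j : ZMod m,
      (DihedralGroup.r j : DihedralGroup m)⁻¹ = DihedralGroup.r (-j) := by
    intro j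
    apply inv_eq_of_mul_eq_one_right
    rw [DihedralGroup.r_mul_r, add_neg_cancel, ← DihedralGroup.one_def]
  have hinv_sr : ∀ i : ZMod m,
      (DihedralGroup.sr i : DihedralGroup m)⁻¹ = DihedralGroup.sr i :=
    fun i => inv_eq_of_mul_eq_one_right (DihedralGroup.sr_mul_self i)
  have hsr_sq : ∀ i : ZMod m, M (DihedralGroup.sr i) ^ 2 = 1 := by
    intro i
    rw [sq, ← hMmul, DihedralGroup.sr_mul_self, hM1]
  -- reflection character values squared lie in {0, 4}
  have hsr_sq_vals : ∀ i : ZMod m, V.character (DihedralGroup.sr i) ^ 2 = 0 ∨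
      V.character (DihedralGroup.sr i) ^ 2 = 4 := by
    intro i
    obtain ⟨u, v, huv_sum, _, huq, hvq⟩ :=
      exists_roots (M (DihedralGroup.sr i)).trace (M (DihedralGroup.sr i)).det
    have hu2 : u ^ 2 = 1 := root_pow_one _ u huq 2 (hsr_sq i)
    have hv2 : v ^ 2 = 1 := root_pow_one _ v hvq 2 (hsr_sq i)
    have hval : V.character (DihedralGroup.sr i) = u + v := by rw [htr, ← huv_sum]
    have hu : u = 1 ∨ u = -1 := by
      rcases mul_eq_zero.mp (show (u-1)*(u+1) = 0 by linear_combination hu2) with h | h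
      exacts [Or.inl (sub_eq_zero.mp h), Or.inr (eq_neg_of_add_eq_zero_left h)]
    have hv : v = 1 ∨ v = -1 := by
      rcases mul_eq_zero.mp (show (v-1)*(v+1) = 0 by linear_combination hv2) with h | h
      exacts [Or.inl (sub_eq_zero.mp h), Or.inr (eq_neg_of_add_eq_zero_left h)]
    rw [hval]
    rcases hu with rfl | rfl <;> rcases hv with rfl | rfl <;> norm_num
  -- orthogonality
  letI : Fintype (DihedralGroup m) := (inferInstance : Fintype (DihedralGroup m))
  letI : Invertible ((Nat.card (DihedralGroup m) : ℂ)) := by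
    apply invertibleOfNonzero
    rw [Nat.card_eq_fintype_card, DihedralGroup.card]
    exact Nat.cast_ne_zero.mpr (by omega)
  have horth := FDRep.char_orthonormal (k := ℂ) (G := DihedralGroup m) V V
  rw [if_pos ⟨Iso.refl V⟩] at horth
  have hsum0 : (∑ g : DihedralGroup m, V.character g * V.character g⁻¹)
      = (Fintype.card (DihedralGroup m) : ℂ) := by
    have hcard0 : (Fintype.card (DihedralGroup m) : ℂ) = ((2 * m : ℕ) : ℂ) := by rw [DihedralGroup.card]
    have h2 := congrArg (fun x : ℂ => (Nat.card (DihedralGroup m) : ℂ) * x) horth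
    simp only [smul_eq_mul, ← mul_assoc, mul_invOf_self, one_mul, mul_one] at h2
    rw [Nat.card_eq_fintype_card, mul_inv_cancel₀ (by rw [hcard0]; exact Nat.cast_ne_zero.mpr (by omega)), one_mul] at h2
    exact h2
  have hcard : (Fintype.card (DihedralGroup m) : ℂ) = 2 * m := by
    rw [DihedralGroup.card]; push_cast; ring
  -- sum decomposition
  have hdecomp : ∀ f : DihedralGroup m → ℂ, ∑ g : DihedralGroup m, f g =
      (∑ i : ZMod m, f (DihedralGroup.r i)) + ∑ i : ZMod m, f (DihedralGroup.sr i) := by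
    intro f
    let e : ZMod m ⊕ ZMod m ≃ DihedralGroup m :=
      { toFun := fun x => match x with
          | .inl i => DihedralGroup.r i
          | .inr i => DihedralGroup.sr i
        invFun := fun g => match g with
          | .r i => .inl i
          | .sr i => .inr i
        left_inv := by rintro (i | i) <;> rfl
        right_inv := by rintro (i | i) <;> rfl }
    rw [← Equiv.sum_comp e f, Fintype.sum_sum_type]
    rfl
  -- rotation terms of the orthogonality sum
  set τ := z * w⁻¹ with hτdef
  set σ := w * z⁻¹ with hσdef
  have hτm : τ ^ m = 1 := by
    rw [hτdef, mul_pow, inv_pow, hzm, hwm, inv_one, mul_one]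
  have hσm : σ ^ m = 1 := by
    rw [hσdef, mul_pow, inv_pow, hwm, hzm, inv_one, mul_one]
  have hpow_one : ∀ x : ℂ, x ^ m = 1 → ∀ a b : ℕ, m ∣ a + b → x ^ a * x ^ b = 1 := by
    intro x hx a b hab
    obtain ⟨q, hq⟩ := hab
    rw [← pow_add, hq, pow_mul, hx, one_pow]
  have hterm : ∀ i : ZMod m, V.character (DihedralGroup.r i) *
      V.character ((DihedralGroup.r i)⁻¹) = 2 + τ ^ i.val + σ ^ i.val := by
    intro i
    rw [hinv_r, hχr, hχr]
    set a := i.val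
    set bb := (-i).val
    have hab : m ∣ a + bb := by
      have h := ZMod.val_add i (-i)
      rw [add_neg_cancel, ZMod.val_zero] at h
      exact Nat.dvd_of_mod_eq_zero h.symm
    have h1 : z ^ a * z ^ bb = 1 := hpow_one z hzm a bb hab
    have h2 : w ^ a * w ^ bb = 1 := hpow_one w hwm a bb hab
    have h3 : z ^ a * w ^ bb = τ ^ a := by
      have hww : w ^ a * w ^ bb = 1 := h2
      have hτa : τ ^ a = z ^ a * (w ^ a)⁻¹ := by rw [hτdef, mul_pow, inv_pow]
      have hwa : (w : ℂ) ^ a ≠ 0 := pow_ne_zero _ hw0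
      rw [hτa, eq_mul_inv_iff_mul_eq₀ hwa]
      linear_combination z ^ a * hww
    have h4 : w ^ a * z ^ bb = σ ^ a := by
      have hzz : z ^ a * z ^ bb = 1 := h1
      have hσa : σ ^ a = w ^ a * (z ^ a)⁻¹ := by rw [hσdef, mul_pow, inv_pow]
      have hza : (z : ℂ) ^ a ≠ 0 := pow_ne_zero _ hz0
      rw [hσa, eq_mul_inv_iff_mul_eq₀ hza]
      linear_combination w ^ a * hzz
    linear_combination h1 + h2 + h3 + h4
  have hrot : ∑ i : ZMod m, (V.character (DihedralGroup.r i) *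
        V.character ((DihedralGroup.r i)⁻¹))
      = 2 * m + (∑ k ∈ Finset.range m, τ ^ k) + (∑ k ∈ Finset.range m, σ ^ k) := by
    rw [Finset.sum_congr rfl (fun i _ => hterm i)]
    rw [Finset.sum_add_distrib, Finset.sum_add_distrib]
    rw [zmod_sum m (fun k => τ ^ k), zmod_sum m (fun k => σ ^ k)]
    simp only [Finset.sum_const, Finset.card_univ, ZMod.card, nsmul_eq_mul]
    ring
  have hrefl : ∑ i : ZMod m, (V.character (DihedralGroup.sr i) *
        V.character ((DihedralGroup.sr i)⁻¹))
      = ∑ i : ZMod m, V.character (DihedralGroup.sr i) ^ 2 := by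
    apply Finset.sum_congr rfl
    intro i _
    rw [hinv_sr, sq]
  have hkey : (2 * m : ℂ) = (2 * m + (∑ k ∈ Finset.range m, τ ^ k)
      + (∑ k ∈ Finset.range m, σ ^ k)) + ∑ i : ZMod m, V.character (DihedralGroup.sr i) ^ 2 := by
    rw [← hrot, ← hrefl, ← hdecomp (fun g => V.character g * V.character g⁻¹), hsum0, hcard]
  -- z ≠ w via positivity of reflection contributions
  have hre_nonneg : ∀ i : ZMod m, 0 ≤ (V.character (DihedralGroup.sr i) ^ 2).re := by
    intro i
    rcases hsr_sq_vals i with h | h <;> rw [h] <;> norm_num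
  have hzw_ne : z ≠ w := by
    intro hzw
    have hτ1 : τ = 1 := by rw [hτdef, hzw, mul_inv_cancel₀ hw0]
    have hσ1 : σ = 1 := by rw [hσdef, hzw, mul_inv_cancel₀ hw0]
    have hR : ∑ i : ZMod m, V.character (DihedralGroup.sr i) ^ 2 = -(2 * m) := by
      have hτs : ∑ k ∈ Finset.range m, τ ^ k = m := by simp [hτ1]
      have hσs : ∑ k ∈ Finset.range m, σ ^ k = m := by simp [hσ1]
      rw [hτs, hσs] at hkey
      linear_combination -hkey
    have hre := congrArg Complex.re hR
    rw [Complex.re_sum] at hre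
    have hge : (0:ℝ) ≤ ∑ i : ZMod m, (V.character (DihedralGroup.sr i) ^ 2).re :=
      Finset.sum_nonneg (fun i _ => hre_nonneg i)
    rw [hre] at hge
    simp only [Complex.neg_re, Complex.mul_re, Complex.re_ofNat, Complex.natCast_re,
      Complex.im_ofNat, Complex.natCast_im, mul_zero, sub_zero] at hge
    have : (0:ℝ) < 2 * m := by positivity
    linarith
  have hτ1 : τ ≠ 1 := by
    intro h
    rw [hτdef, mul_inv_eq_one₀ hw0] at h
    exact hzw_ne h
  have hσ1 : σ ≠ 1 := by
    intro h
    rw [hσdef, mul_inv_eq_one₀ hz0] at h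
    exact hzw_ne h.symm
  have hRzero : ∑ i : ZMod m, V.character (DihedralGroup.sr i) ^ 2 = 0 := by
    rw [geom_zero m hτm hτ1, geom_zero m hσm hσ1] at hkey
    linear_combination -hkey
  have hsr0 : ∀ i : ZMod m, V.character (DihedralGroup.sr i) = 0 := by
    intro i
    have hre := congrArg Complex.re hRzero
    rw [Complex.re_sum] at hre
    have hz' := (Finset.sum_eq_zero_iff_of_nonneg
      (fun i _ => hre_nonneg i)).mp (by rw [hre]; rfl) i (Finset.mem_univ i)
    rcases hsr_sq_vals i with h | h
    · exact (pow_eq_zero_iff (by norm_num : (2:ℕ) ≠ 0)).mp h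
    · rw [h] at hz'; norm_num at hz'
  -- conjugation by a reflection: trace and det constraints
  have hconj : DihedralGroup.sr 0 * DihedralGroup.r 1 * (DihedralGroup.sr 0)⁻¹
      = (DihedralGroup.r (-1) : DihedralGroup m) := by
    rw [hinv_sr, DihedralGroup.sr_mul_r, DihedralGroup.sr_mul_sr]
    norm_num
  have hm1cast : ((m - 1 : ℕ) : ZMod m) = -1 := by
    have h1 : ((m - 1 : ℕ) : ZMod m) = (m : ZMod m) - 1 := by
      push_cast [Nat.cast_sub (by omega : 1 ≤ m)]
      ring
    rw [h1, ZMod.natCast_self, zero_sub]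
  have hrm1 : (DihedralGroup.r (-1) : DihedralGroup m) = (DihedralGroup.r 1) ^ (m - 1) := by
    rw [DihedralGroup.r_one_pow, hm1cast]
  have hMrm1 : M (DihedralGroup.r (-1)) = A ^ (m - 1) := by
    rw [hrm1, hMpow, hAdef]
  have hzinv : z ^ (m - 1) = z⁻¹ := by
    apply eq_inv_of_mul_eq_one_left
    rw [← pow_succ, Nat.sub_add_cancel (by omega : 1 ≤ m), hzm]
  have hwinv : w ^ (m - 1) = w⁻¹ := by
    apply eq_inv_of_mul_eq_one_left
    rw [← pow_succ, Nat.sub_add_cancel (by omega : 1 ≤ m), hwm]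
  have hval1 : ((1 : ZMod m)).val = 1 := by
    rw [ZMod.val_one_eq_one_mod]
    exact Nat.mod_eq_of_lt (by omega)
  have htrace_eq : z⁻¹ + w⁻¹ = z + w := by
    have h1 : V.character (DihedralGroup.r (-1 : ZMod m))
        = V.character (DihedralGroup.r (1 : ZMod m)) := by
      rw [← hconj]
      exact FDRep.char_conj V _ _
    rw [hχr, hχr, hval1] at h1
    have h2 : (-1 : ZMod m).val = m - 1 := by
      rw [← hm1cast, ZMod.val_cast_of_lt (by omega)]
    rw [h2, hzinv, hwinv, pow_one, pow_one] at h1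
    exact h1
  have hdet_eq : (z * w)⁻¹ = z * w := by
    have hd1 : (M (DihedralGroup.sr 0)).det * (M (DihedralGroup.sr 0)).det = 1 := by
      rw [← Matrix.det_mul, ← sq, hsr_sq, Matrix.det_one]
    have hd2 : (M (DihedralGroup.r (-1 : ZMod m))).det = A.det := by
      rw [← hconj, hinv_sr, hMmul, hMmul, Matrix.det_mul, Matrix.det_mul]
      rw [← hAdef]
      linear_combination A.det * hd1
    rw [hMrm1, Matrix.det_pow, ← hzw_prod] at hd2
    have hzwinv : (z * w) ^ (m - 1) = (z * w)⁻¹ := by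
      apply eq_inv_of_mul_eq_one_left
      rw [← pow_succ, Nat.sub_add_cancel (by omega : 1 ≤ m), mul_pow, hzm, hwm, mul_one]
    rw [hzwinv] at hd2
    exact hd2
  have hzw0 : z * w ≠ 0 := mul_ne_zero hz0 hw0
  have hp2 : (z * w) ^ 2 = 1 := by
    have := congrArg (fun x => x * (z * w)) hdet_eq
    simp only [inv_mul_cancel₀ hzw0] at this
    rw [sq]
    exact this.symm
  -- conclude w = z⁻¹
  have hw_inv : w = z⁻¹ := by
    rcases mul_eq_zero.mp (show ((z*w) - 1) * ((z*w) + 1) = 0 by linear_combination hp2)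
        with h | h
    · exact eq_inv_of_mul_eq_one_right (sub_eq_zero.mp h)
    · -- z * w = -1 case: leads to contradiction with faithfulness
      exfalso
      have hzw_neg : z * w = -1 := eq_neg_of_add_eq_zero_left h
      have hzi : z⁻¹ = -w := by
        apply inv_eq_of_mul_eq_one_right
        rw [mul_neg, hzw_neg]; ring
      have hwi : w⁻¹ = -z := by
        apply inv_eq_of_mul_eq_one_right
        rw [mul_neg, mul_comm, hzw_neg]; ring
      have hsum0' : z + w = 0 := by
        rw [hzi, hwi] at htrace_eq
        linear_combination -htrace_eq / 2
      have hwz : w = -z := eq_neg_of_add_eq_zero_right hsum0'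
      have hz2 : z ^ 2 = 1 := by
        rw [hwz] at hzw_neg
        linear_combination -hzw_neg
      have hw2 : w ^ 2 = 1 := by
        rw [hwz]
        linear_combination hz2
      have hA2 : A ^ 2 = 1 := pow_eq_one_of_roots A z w hzw_ne hzw_sum hzw_prod 2 hz2 hw2
      have hr2 : (DihedralGroup.r 1 : DihedralGroup m) ^ 2 = 1 := by
        apply hMinj
        rw [hMpow, ← hAdef, hA2, hM1]
      have hdvd2 : m ∣ 2 := by
        rw [← DihedralGroup.orderOf_r_one (n := m)]
        exact orderOf_dvd_of_pow_eq_one hr2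
      have := Nat.le_of_dvd two_pos hdvd2
      omega
  -- z is a primitive m-th root of unity
  have hprim : IsPrimitiveRoot z m := by
    refine ⟨hzm, ?_⟩
    intro l hl
    have hwl : w ^ l = 1 := by rw [hw_inv, inv_pow, hl, inv_one]
    have hAl : A ^ l = 1 := pow_eq_one_of_roots A z w hzw_ne hzw_sum hzw_prod l hl hwl
    have hrl : (DihedralGroup.r 1 : DihedralGroup m) ^ l = 1 := by
      apply hMinj
      rw [hMpow, ← hAdef, hAl, hM1]
    rw [← DihedralGroup.orderOf_r_one (n := m)]
    exact orderOf_dvd_of_pow_eq_one hrl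
  -- character of rotations in terms of z only
  have hχr' : ∀ j : ZMod m, V.character (DihedralGroup.r j)
      = z ^ j.val + (z ^ j.val)⁻¹ := by
    intro j
    rw [hχr, hw_inv, inv_pow]
  -- facts about arbitrary primitive m-th roots
  have hfold : ∀ ζ : ℂ, IsPrimitiveRoot ζ m → ζ ^ (m / 2) = -1 := by
    intro ζ hζ
    apply neg_one_of_sq
    · rw [← pow_mul, mul_comm, hm2]
      exact hζ.pow_eq_one
    · exact hζ.pow_ne_one_of_pos_of_lt (by omega) (by omega)
  have hquarter : ∀ ζ : ℂ, IsPrimitiveRoot ζ m → ζ ^ (m / 4) + (ζ ^ (m / 4))⁻¹ = 0 := by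
    intro ζ hζ
    have hsq : (ζ ^ (m / 4)) ^ 2 = -1 := by
      rw [← pow_mul, show m / 4 * 2 = m / 2 by omega]
      exact hfold ζ hζ
    have hinv : (ζ ^ (m / 4))⁻¹ = -(ζ ^ (m / 4)) := by
      apply inv_eq_of_mul_eq_one_right
      rw [mul_neg, ← sq, hsq]
      norm_num
    rw [hinv]
    ring
  -- helpers for (non-)identity elements
  have hr_ne_one : ∀ j : ZMod m, j ≠ 0 → (DihedralGroup.r j : DihedralGroup m) ≠ 1 := by
    intro j hj hg
    rw [DihedralGroup.one_def] at hg
    exact hj (by injection hg)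
  have hsr_ne_one : ∀ i : ZMod m, (DihedralGroup.sr i : DihedralGroup m) ≠ 1 := by
    intro i h
    rw [DihedralGroup.one_def] at h
    cases h
  have hcast_ne : ∀ k : ℕ, 0 < k → k < m → ((k : ℕ) : ZMod m) ≠ 0 := by
    intro k h0 h1 h
    have := ZMod.val_cast_of_lt h1
    rw [h, ZMod.val_zero] at this
    omega
  set ω : ℂ := Complex.exp (2 * (Real.pi : ℂ) * Complex.I / (m : ℂ)) with hωdef
  have hω : IsPrimitiveRoot ω m := Complex.isPrimitiveRoot_exp m (by omega)
  have hω0 : ω ≠ 0 := Complex.exp_ne_zero _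
  have hfun : ∀ r : ℕ, ω ^ (r : ℤ) + ω ^ (-(r : ℤ)) = ω ^ r + (ω ^ r)⁻¹ := by
    intro r
    rw [zpow_neg, zpow_natCast]
  refine ⟨?_, ?_⟩
  · -- value set equality
    ext y
    simp only [Set.mem_setOf_eq, Finset.coe_insert, Set.mem_insert_iff, Finset.coe_image,
      Set.mem_image, Finset.mem_coe, Finset.mem_Icc]
    constructor
    · rintro (rfl | rfl | ⟨r, ⟨hr1, hr2⟩, rfl⟩)
      · refine ⟨DihedralGroup.r ((m / 2 : ℕ) : ZMod m),
          hr_ne_one _ (hcast_ne _ (by omega) (by omega)), ?_⟩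
        rw [hχr', ZMod.val_cast_of_lt (show m / 2 < m by omega), hfold z hprim]
        norm_num
      · exact ⟨DihedralGroup.sr 0, hsr_ne_one 0, hsr0 0⟩
      · obtain ⟨k, hk, hkeq⟩ := hprim.eq_pow_of_pow_eq_one
          (show (ω ^ r) ^ m = 1 by
            rw [← pow_mul, mul_comm, pow_mul, hω.pow_eq_one, one_pow])
        have hk0 : k ≠ 0 := by
          rintro rfl
          rw [pow_zero] at hkeq
          exact (hω.pow_ne_one_of_pos_of_lt (show r ≠ 0 by omega)
            (show r < m by omega)) hkeq.symm
        refine ⟨DihedralGroup.r ((k : ℕ) : ZMod m),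
          hr_ne_one _ (hcast_ne _ (by omega) hk), ?_⟩
        rw [hχr', ZMod.val_cast_of_lt hk, hkeq, hfun]
    · rintro ⟨g, hg, rfl⟩
      cases g with
      | sr i => exact Or.inr (Or.inl (hsr0 i))
      | r j =>
        have hj : j ≠ 0 := by
          rintro rfl
          exact hg DihedralGroup.one_def.symm
        have hjval : 0 < j.val := Nat.pos_of_ne_zero (fun h => hj (by
          have := ZMod.natCast_zmod_val j
          rw [h] at this
          simpa using this.symm))
        obtain ⟨k, hk, hkeq⟩ := hω.eq_pow_of_pow_eq_one
          (show (z ^ j.val) ^ m = 1 by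
            rw [← pow_mul, mul_comm, pow_mul, hzm, one_pow])
        have hzz1 : z ^ j.val ≠ 1 := hprim.pow_ne_one_of_pos_of_lt hjval.ne' (ZMod.val_lt j)
        have hk0 : 0 < k := by
          rcases Nat.eq_zero_or_pos k with rfl | h
          · rw [pow_zero] at hkeq
            exact absurd hkeq.symm hzz1
          · exact h
        rw [hχr', ← hkeq]
        rcases lt_trichotomy k (m / 2) with hlt | heq | hgt
        · exact Or.inr (Or.inr ⟨k, ⟨hk0, by omega⟩, by rw [hfun]⟩)
        · left
          rw [heq, hfold ω hω]
          norm_num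
        · refine Or.inr (Or.inr ⟨m - k, ⟨by omega, by omega⟩, ?_⟩)
          rw [hfun]
          have hxr : ω ^ (m - k) = (ω ^ k)⁻¹ := by
            apply eq_inv_of_mul_eq_one_left
            rw [← pow_add, show m - k + k = m by omega]
            exact hω.pow_eq_one
          rw [hxr, inv_inv]
          ring
  · -- the product identity
    rw [hdeg]
    have h0mem : (0 : ℂ) ∈ (Finset.Icc 1 (m / 2 - 1)).image
        (fun r : ℕ => ω ^ (r : ℤ) + ω ^ (-(r : ℤ))) := by
      apply Finset.mem_image.mpr
      exact ⟨m / 4, Finset.mem_Icc.mpr ⟨by omega, by omega⟩, by rw [hfun]; exact hquarter ω hω⟩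
    have hins := Finset.insert_eq_self.mpr h0mem
    have hne2 : (-2 : ℂ) ∉ (Finset.Icc 1 (m / 2 - 1)).image
        (fun r : ℕ => ω ^ (r : ℤ) + ω ^ (-(r : ℤ))) := by
      intro hmem
      obtain ⟨r, hr, heq⟩ := Finset.mem_image.mp hmem
      rw [Finset.mem_Icc] at hr
      rw [hfun] at heq
      have hx0 : ω ^ r ≠ 0 := pow_ne_zero _ hω0
      have hq : (ω ^ r + 1) ^ 2 = 0 := by
        field_simp at heq
        linear_combination heq
      have hx : ω ^ r = -1 := by
        have h' := pow_eq_zero_iff (n := 2) (by norm_num) |>.mp hq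
        exact eq_neg_of_add_eq_zero_left h'
      have h2r : ω ^ (2 * r) = 1 := by
        rw [two_mul, pow_add, hx]
        norm_num
      have hd := hω.dvd_of_pow_eq_one _ h2r
      have := Nat.le_of_dvd (by omega) hd
      omega
    have hinj : ∀ x ∈ Finset.Icc 1 (m / 2 - 1), ∀ y ∈ Finset.Icc 1 (m / 2 - 1),
        (fun r : ℕ => ω ^ (r : ℤ) + ω ^ (-(r : ℤ))) x
          = (fun r : ℕ => ω ^ (r : ℤ) + ω ^ (-(r : ℤ))) y → x = y := by
      intro a ha bb hb hab
      rw [Finset.mem_Icc] at ha hb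
      simp only [hfun] at hab
      rcases xinv_cases _ _ (pow_ne_zero _ hω0) (pow_ne_zero _ hω0) hab with h' | h'
      · exact hω.pow_inj (by omega) (by omega) h'
      · rw [← pow_add] at h'
        have hd := hω.dvd_of_pow_eq_one _ h'
        have := Nat.le_of_dvd (by omega) hd
        omega
    rw [hins, Finset.prod_insert hne2, Finset.prod_image hinj]
    have hstep : ∀ r ∈ Finset.Icc 1 (m / 2 - 1), (2 : ℂ) - (ω ^ (r : ℤ) + ω ^ (-(r : ℤ)))
        = (1 - ω ^ r) * (1 - ω ^ (m - r)) := by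
      intro r hr
      rw [Finset.mem_Icc] at hr
      rw [hfun]
      have hxr : ω ^ (m - r) = (ω ^ r)⁻¹ := by
        apply eq_inv_of_mul_eq_one_left
        rw [← pow_add, show m - r + r = m by omega]
        exact hω.pow_eq_one
      rw [hxr]
      have hx0 : ω ^ r ≠ 0 := pow_ne_zero _ hω0
      field_simp
      ring
    rw [Finset.prod_congr rfl hstep]
    have hcyc := prod_one_sub m (by omega) hω
    have hIcoIcc : Finset.Ico 1 (m / 2) = Finset.Icc 1 (m / 2 - 1) := by
      ext a
      simp only [Finset.mem_Ico, Finset.mem_Icc]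
      omega
    have hsplit : (∏ k ∈ Finset.Ico 1 m, (1 - ω ^ k)) =
        (∏ r ∈ Finset.Icc 1 (m / 2 - 1), ((1 - ω ^ r) * (1 - ω ^ (m - r))))
          * (1 - ω ^ (m / 2)) := by
      rw [← Finset.prod_Ico_consecutive _ (show 1 ≤ m / 2 by omega) (show m / 2 ≤ m by omega)]
      rw [Finset.prod_eq_prod_Ico_succ_bot (show m / 2 < m by omega)]
      have hre2 : ∏ k ∈ Finset.Ico (m / 2 + 1) m, (1 - ω ^ k)
          = ∏ r ∈ Finset.Ico 1 (m / 2), (1 - ω ^ (m - r)) := by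
        apply Finset.prod_nbij' (fun k => m - k) (fun r => m - r)
        · intro a ha
          rw [Finset.mem_Ico] at ha ⊢
          omega
        · intro a ha
          rw [Finset.mem_Ico] at ha ⊢
          omega
        · intro a ha
          rw [Finset.mem_Ico] at ha
          omega
        · intro a ha
          rw [Finset.mem_Ico] at ha
          omega
        · intro a ha
          rw [Finset.mem_Ico] at ha
          rw [show m - (m - a) = a by omega]
      rw [hre2, hIcoIcc, Finset.prod_mul_distrib]
      ring
    have hfold2 : (1 : ℂ) - ω ^ (m / 2) = 2 := by
      rw [hfold ω hω]
      ring
    rw [hsplit, hfold2] at hcyc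
    rw [hcard]
    linear_combination 2 * hcyc
end

section
/- Let m be a positive integer divisible by 4 and let ψ be a faithful irreducible character of degree 2 of the generalized quaternion (dicyclic) group Q_{2m} of order 2m. Then (Q_{2m}, ψ) is sharp of type L = {−2, 0} ∪ {ω^r + ω^{−r} : 1 ≤ r ≤ m/2 − 1}, where ω = e^{2πi/m}. -/
open CategoryTheory

open QuaternionGroup Module in
theorem schurFDRep {G : Type} [Group G] (V : FDRep ℂ G) [Simple V] (T : V →ₗ[ℂ] V)
    (hT : ∀ g : G, T ∘ₗ V.ρ g = V.ρ g ∘ₗ T) : ∃ c : ℂ, T = c • LinearMap.id := by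
  let f : V ⟶ V := Action.Hom.mk (InducedCategory.homMk (ModuleCat.ofHom T)) (fun g => by
    ext v
    exact congrFun (congrArg (fun h => h.toFun) (hT g)) v)
  obtain ⟨c, hc⟩ := CategoryTheory.endomorphism_simple_eq_smul_id ℂ f
  refine ⟨c, ?_⟩
  have := congrArg (fun h => h.hom) hc
  simp only [Action.smul_hom, Action.id_hom] at this
  ext v
  exact (congrFun (congrArg (fun h => h.hom.hom.toFun) this) v).symm

open QuaternionGroup Module in
theorem quatChar (n : ℕ) (hn : 2 ≤ n) [NeZero n] (V : FDRep ℂ (QuaternionGroup n)) [Simple V]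
    (hfaith : Function.Injective V.ρ) (hdeg : Module.finrank ℂ V = 2) :
    ∃ lam : ℂ, IsPrimitiveRoot lam (2 * n) ∧
      (∀ i : ZMod (2 * n), V.character (a i) = lam ^ i.val + (lam ^ i.val)⁻¹) ∧
      (∀ i : ZMod (2 * n), V.character (xa i) = 0) := by
  haveI : NeZero (2 * n) := ⟨by omega⟩
  have h2n : (2 * n) ≠ 0 := by omega
  set A := V.ρ (a 1) with hA
  set B := V.ρ (xa 0) with hB
  have hA2n : A ^ (2 * n) = 1 := by
    rw [hA, ← map_pow, a_one_pow_n, map_one]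
  have : Nontrivial V := Module.nontrivial_of_finrank_pos (R := ℂ) (by rw [hdeg]; norm_num)
  obtain ⟨lam, hlam⟩ := Module.End.exists_eigenvalue (A : Module.End ℂ V)
  obtain ⟨v, hv⟩ := hlam.exists_hasEigenvector
  have hv0 : v ≠ 0 := hv.right
  have hAv : A v = lam • v := hv.apply_eq_smul
  have hpowv : ∀ (u : V) (μ : ℂ), A u = μ • u → ∀ k : ℕ, (A ^ k) u = μ ^ k • u := by
    intro u μ hu k
    induction k with
    | zero => simp
    | succ k ih =>
      rw [pow_succ, Module.End.mul_apply, hu, map_smul, ih, smul_smul, ← pow_succ']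
  have hlam2n : lam ^ (2 * n) = 1 := by
    have h1 : (A ^ (2 * n)) v = lam ^ (2 * n) • v := hpowv v lam hAv (2 * n)
    rw [hA2n, Module.End.one_apply] at h1
    have h2 : (lam ^ (2 * n) - 1) • v = 0 := by rw [sub_smul, one_smul, ← h1, sub_self]
    rcases smul_eq_zero.mp h2 with h | h
    · exact sub_eq_zero.mp h
    · exact absurd h hv0
  have hlam0 : lam ≠ 0 := by
    intro h
    rw [h, zero_pow h2n] at hlam2n
    exact zero_ne_one hlam2n
  have hAinv : V.ρ (a (-1)) v = lam⁻¹ • v := by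
    have e : (a (-1) : QuaternionGroup n) * a 1 = 1 := by
      rw [a_mul_a, neg_add_cancel]; rfl
    have h1 : V.ρ (a (-1)) (A v) = v := by
      rw [hA, ← Module.End.mul_apply, ← map_mul, e, map_one, Module.End.one_apply]
    rw [hAv, map_smul] at h1
    rw [eq_comm, inv_smul_eq_iff₀ hlam0, h1]
  set w := B v with hw
  have hw0 : w ≠ 0 := by
    intro h
    have e : ((xa 0 : QuaternionGroup n))⁻¹ * xa 0 = 1 := inv_mul_cancel _
    have h1 : V.ρ ((xa 0 : QuaternionGroup n)⁻¹) w = v := by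
      rw [hw, hB, ← Module.End.mul_apply, ← map_mul, e, map_one, Module.End.one_apply]
    rw [h, map_zero] at h1
    exact hv0 h1.symm
  have hAw : A w = lam⁻¹ • w := by
    have e : (a 1 : QuaternionGroup n) * xa 0 = xa 0 * a (-1) := by
      rw [a_mul_xa, xa_mul_a, zero_sub, zero_add]
    calc A w = (A * B) v := rfl
    _ = V.ρ (a 1 * xa 0) v := by rw [map_mul]
    _ = V.ρ (xa 0 * a (-1)) v := by rw [e]
    _ = B (V.ρ (a (-1)) v) := by rw [map_mul]; rfl
    _ = lam⁻¹ • w := by rw [hAinv, map_smul]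
  have hBw : B w = lam ^ n • v := by
    have e : (xa 0 : QuaternionGroup n) * xa 0 = (a 1 : QuaternionGroup n) ^ n := by
      rw [xa_mul_xa, a_one_pow, add_zero, sub_zero]
    calc B w = V.ρ (xa 0 * xa 0) v := by rw [map_mul]; rfl
    _ = (A ^ n) v := by rw [e, map_pow, hA]
    _ = lam ^ n • v := hpowv v lam hAv n
  -- exclude lam ^ 2 = 1 using Schur's lemma
  have hlam2 : lam ^ 2 ≠ 1 := by
    intro hl2
    have hlinv : lam⁻¹ = lam := inv_eq_of_mul_eq_one_right (by rw [← sq, hl2])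
    set T : V →ₗ[ℂ] V := A + V.ρ (a (-1)) with hT
    have hcomm : ∀ g, T * V.ρ g = V.ρ g * T := by
      rintro (i | i) <;>
        simp only [hT, hA, add_mul, mul_add, ← map_mul, a_mul_a, a_mul_xa, xa_mul_a]
      · ring_nf
      · rw [add_comm]; ring_nf
    obtain ⟨c, hc⟩ := schurFDRep V T (by
      intro g
      rw [← Module.End.mul_eq_comp, ← Module.End.mul_eq_comp]
      exact hcomm g)
    have hAT : A * T = A ^ 2 + 1 := by
      rw [hT, mul_add, ← sq, hA, ← map_mul, a_mul_a]
      congr 1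
      rw [add_neg_cancel, ← one_def, map_one]
    have hATc : A * T = c • A := by
      rw [hc, mul_smul_comm, ← Module.End.one_eq_id, mul_one]
    -- apply to v : lam^2 + 1 = c * lam
    have hquad : lam ^ 2 + 1 = c * lam := by
      have h1 := congrArg (fun (f : V →ₗ[ℂ] V) => f v) (hAT.symm.trans hATc)
      simp only [LinearMap.add_apply, LinearMap.smul_apply, Module.End.one_apply,
        Module.End.pow_apply] at h1
      have h2 : (A ^ 2) v = lam ^ 2 • v := hpowv v lam hAv 2
      rw [Module.End.pow_apply] at h2
      rw [h2, hAv, smul_smul] at h1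
      have h3 : (lam ^ 2 + 1 - c * lam) • v = 0 := by
        rw [sub_smul, add_smul, one_smul, h1, sub_self]
      rcases smul_eq_zero.mp h3 with h | h
      · exact sub_eq_zero.mp h
      · exact absurd h hv0
    have hc2 : c = 2 * lam := by
      have h4 : c * lam = 2 := by rw [← hquad, hl2]; ring
      calc c = c * lam ^ 2 := by rw [hl2, mul_one]
      _ = c * lam * lam := by ring
      _ = 2 * lam := by rw [h4]
    set N : V →ₗ[ℂ] V := A - lam • (1 : V →ₗ[ℂ] V) with hN
    have hA2 : A ^ 2 = c • A - 1 := by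
      rw [← hATc, hAT]; abel
    have hN2 : N * N = 0 := by
      have e1 : N * N = A * A - lam • A - lam • A + (lam * lam) • (1 : V →ₗ[ℂ] V) := by
        rw [hN]
        simp only [sub_mul, mul_sub, smul_sub, smul_mul_assoc, mul_smul_comm, one_mul, mul_one,
          smul_smul]
        abel
      rw [e1, ← sq, hA2, hc2]
      have e3 : lam * lam = 1 := by rw [← sq, hl2]
      rw [e3, one_smul]
      module
    have hpowN : ∀ k : ℕ, A ^ (k + 1)
        = lam ^ (k + 1) • (1 : V →ₗ[ℂ] V) + (((k : ℂ) + 1) * lam ^ k) • N := by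
      intro k
      induction k with
      | zero => simp [hN]
      | succ k ih =>
        have : A ^ (k + 1 + 1) = A ^ (k + 1) * A := by rw [pow_succ]
        rw [this, ih]
        have hAeq : A = lam • (1 : V →ₗ[ℂ] V) + N := by rw [hN]; abel
        rw [hAeq]
        simp only [add_mul, mul_add, smul_mul_assoc, mul_smul_comm, one_mul, mul_one, smul_smul,
          hN2, smul_zero]
        rw [add_zero]
        push_cast
        match_scalars <;> ring
    have hNzero : N = 0 := by
      have h5 := hpowN (2 * n - 1)
      have e4 : 2 * n - 1 + 1 = 2 * n := by omega
      rw [e4, hA2n, hlam2n, one_smul] at h5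
      have h6 : ((((2 * n - 1 : ℕ) : ℂ) + 1) * lam ^ (2 * n - 1)) • N = 0 := by
        have h5' := h5.symm
        rwa [add_eq_left] at h5'
      rcases smul_eq_zero.mp h6 with h | h
      · exfalso
        rcases mul_eq_zero.mp h with h' | h'
        · have e5 : ((2 * n - 1 : ℕ) : ℂ) + 1 = ((2 * n - 1 + 1 : ℕ) : ℂ) := by
            push_cast; ring
          rw [e5, e4] at h'
          exact absurd (Nat.cast_eq_zero.mp h') (by omega)
        · exact hlam0 (pow_eq_zero_iff (by omega) |>.mp h')
      · exact h
    have hAeq2 : A = lam • (1 : V →ₗ[ℂ] V) := by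
      have : A - lam • (1 : V →ₗ[ℂ] V) = 0 := by rw [← hN]; exact hNzero
      rw [sub_eq_zero] at this; exact this
    have hAB : A * B = B * A := by
      rw [hAeq2, smul_mul_assoc, mul_smul_comm, one_mul, mul_one]
    have hgr : (a 1 : QuaternionGroup n) * xa 0 = xa 0 * a 1 := by
      apply hfaith
      rw [map_mul, map_mul, ← hA, ← hB, hAB]
    rw [a_mul_xa, xa_mul_a, zero_sub, zero_add] at hgr
    have h7 : (-1 : ZMod (2 * n)) = 1 := by injection hgr
    have h8 : ((2 : ℕ) : ZMod (2 * n)) = 0 := by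
      push_cast
      linear_combination -h7
    have h9 := (ZMod.natCast_eq_zero_iff 2 (2 * n)).mp h8
    have := Nat.le_of_dvd (by norm_num) h9
    omega
  have hlamne : lam⁻¹ ≠ lam := by
    intro h
    apply hlam2
    rw [sq]
    nth_rewrite 2 [← h]
    exact mul_inv_cancel₀ hlam0
  -- linear independence of v, w
  have hli : LinearIndependent ℂ ![v, w] := by
    rw [LinearIndependent.pair_iff]
    intro s t hst
    have h1 : (s * lam) • v + (t * lam⁻¹) • w = 0 := by
      have := congrArg A hst
      rwa [map_add, map_smul, map_smul, hAv, hAw, smul_smul, smul_smul, map_zero] at this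
    have h2 : (s * lam⁻¹) • v + (t * lam⁻¹) • w = 0 := by
      have := congrArg (fun u => lam⁻¹ • u) hst
      simpa [smul_add, smul_smul, mul_comm] using this
    have h3 : (s * lam - s * lam⁻¹) • v = 0 := by
      rw [sub_smul]
      have := congrArg₂ (fun x y => x - y) h1 h2
      simpa using this
    have hs : s = 0 := by
      rcases smul_eq_zero.mp h3 with h | h
      · have : s * (lam - lam⁻¹) = 0 := by rw [mul_sub]; exact h
        rcases mul_eq_zero.mp this with h' | h'
        · exact h'
        · exact absurd (sub_eq_zero.mp h').symm hlamne
      · exact absurd h hv0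
    have ht : t = 0 := by
      rw [hs, zero_smul, zero_add] at hst
      rcases smul_eq_zero.mp hst with h | h
      · exact h
      · exact absurd h hw0
    exact ⟨hs, ht⟩
  have hcard : Fintype.card (Fin 2) = finrank ℂ V := by simp [hdeg]
  let b := basisOfLinearIndependentOfCardEqFinrank hli hcard
  have hb : ⇑b = ![v, w] := coe_basisOfLinearIndependentOfCardEqFinrank hli hcard
  have hb0 : b 0 = v := by rw [hb]; rfl
  have hb1 : b 1 = w := by rw [hb]; rfl
  -- trace helper
  have htr : ∀ (f : V →ₗ[ℂ] V) (p q r s : ℂ), f v = p • v + q • w → f w = r • v + s • w →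
      LinearMap.trace ℂ V f = p + s := by
    intro f p q r s h1 h2
    rw [LinearMap.trace_eq_matrix_trace ℂ b, Matrix.trace_fin_two]
    have e0 : (LinearMap.toMatrix b b) f 0 0 = p := by
      rw [LinearMap.toMatrix_apply, hb0, h1, ← hb0, ← hb1]
      simp [Finsupp.single_apply]
    have e1 : (LinearMap.toMatrix b b) f 1 1 = s := by
      rw [LinearMap.toMatrix_apply, hb1, h2, ← hb0, ← hb1]
      simp [Finsupp.single_apply]
    rw [e0, e1]
  have hwpow : ∀ k : ℕ, (A ^ k) w = (lam⁻¹) ^ k • w := hpowv w lam⁻¹ hAw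
  have hvpow : ∀ k : ℕ, (A ^ k) v = lam ^ k • v := hpowv v lam hAv
  have hρa : ∀ i : ZMod (2 * n), V.ρ (a i) = A ^ i.val := by
    intro i
    rw [hA, ← map_pow, a_one_pow, ZMod.natCast_val, ZMod.cast_id]
  have hchar_a : ∀ i : ZMod (2 * n),
      V.character (a i) = lam ^ i.val + (lam ^ i.val)⁻¹ := by
    intro i
    have h0 : V.character (a i) = LinearMap.trace ℂ V (V.ρ (a i)) := rfl
    rw [h0, hρa i, htr (A ^ i.val) (lam ^ i.val) 0 0 ((lam⁻¹) ^ i.val)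
      (by rw [hvpow, zero_smul, add_zero]) (by rw [hwpow, zero_smul, zero_add]), inv_pow]
  have hchar_xa : ∀ i : ZMod (2 * n), V.character (xa i) = 0 := by
    intro i
    have h0 : V.character (xa i) = LinearMap.trace ℂ V (V.ρ (xa i)) := rfl
    have e : (xa 0 : QuaternionGroup n) * a i = xa i := by rw [xa_mul_a, zero_add]
    have hfv : V.ρ (xa i) v = (0 : ℂ) • v + lam ^ i.val • w := by
      rw [← e, map_mul, Module.End.mul_apply, hρa, hvpow, map_smul, ← hB, zero_smul, zero_add]
    have hfw : V.ρ (xa i) w = (lam ^ ((n : ZMod (2 * n)) - i).val) • v + (0 : ℂ) • w := by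
      have e2 : (xa i : QuaternionGroup n) * xa 0 = a ((n : ZMod (2 * n)) - i) := by
        rw [xa_mul_xa, add_zero]
      calc V.ρ (xa i) w = V.ρ (xa i * xa 0) v := by rw [map_mul]; rfl
      _ = (A ^ ((n : ZMod (2 * n)) - i).val) v := by rw [e2, hρa]
      _ = (lam ^ ((n : ZMod (2 * n)) - i).val) • v + (0 : ℂ) • w := by
        rw [hvpow, zero_smul, add_zero]
    rw [h0, htr _ _ _ _ _ hfv hfw, add_zero]
  -- primitivity
  refine ⟨lam, ⟨hlam2n, fun l hl => ?_⟩, hchar_a, hchar_xa⟩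
  have hAl : A ^ l = 1 := by
    apply b.ext
    intro i
    fin_cases i
    · show (A ^ l) (b 0) = (1 : V →ₗ[ℂ] V) (b 0)
      rw [hb0, Module.End.one_apply, hvpow, hl, one_smul]
    · show (A ^ l) (b 1) = (1 : V →ₗ[ℂ] V) (b 1)
      rw [hb1, Module.End.one_apply, hwpow, inv_pow, hl, inv_one, one_smul]
  have hgl : (a 1 : QuaternionGroup n) ^ l = 1 := by
    apply hfaith
    rw [map_pow, ← hA, hAl, map_one]
  have := orderOf_dvd_of_pow_eq_one hgl
  rwa [orderOf_a_one] at this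


lemma pm_one {x : ℂ} (h2 : x ^ 2 = 1) (h1 : x ≠ 1) : x = -1 := by
  have h : (x - 1) * (x + 1) = 0 := by linear_combination h2
  rcases mul_eq_zero.mp h with h | h
  · exact absurd (sub_eq_zero.mp h) h1
  · exact eq_neg_of_add_eq_zero_left h

lemma key_prod {n : ℕ} (hn : 2 ≤ n) {ζ : ℂ} (hζ : IsPrimitiveRoot ζ (2 * n)) :
    ∏ r ∈ Finset.Icc 1 (n - 1), (2 - ζ ^ r - (ζ ^ r)⁻¹) = (n : ℂ) := by
  have h2n : 2 * n ≠ 0 := by omega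
  have hζ0 : ζ ≠ 0 := hζ.ne_zero h2n
  have hζN : ζ ^ (2 * n) = 1 := hζ.pow_eq_one
  have hζn : ζ ^ n = -1 := by
    apply pm_one
    · rw [← pow_mul, mul_comm n 2]; exact hζN
    · intro h
      have h' := (hζ.pow_eq_one_iff_dvd n).mp h
      have := Nat.le_of_dvd (by omega) h'
      omega
  have hbig : ∏ r ∈ Finset.Icc 1 (2 * n - 1), (1 - ζ ^ r) = ((2 * n : ℕ) : ℂ) := by
    have hζ' : IsPrimitiveRoot ζ ((2 * n - 1) + 1) := by
      rw [show 2 * n - 1 + 1 = 2 * n from by omega]; exact hζ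
    have Q := hζ'.prod_one_sub_pow_eq_order
    have e : ∏ k ∈ Finset.range (2 * n - 1), (1 - ζ ^ (k + 1))
        = ∏ r ∈ Finset.Icc 1 (2 * n - 1), (1 - ζ ^ r) := by
      apply Finset.prod_nbij' (fun k => k + 1) (fun r => r - 1) <;>
        intros <;> simp_all [Finset.mem_range, Finset.mem_Icc] <;> omega
    have e2 : (2 * n - 1) + 1 = 2 * n := by omega
    rw [e] at Q
    rw [Q, ← Nat.cast_succ]
    exact_mod_cast congrArg (Nat.cast : ℕ → ℂ) e2
  have hsplit : Finset.Icc 1 (2 * n - 1)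
      = (Finset.Icc 1 (n - 1) ∪ Finset.Icc n n) ∪ Finset.Icc (n + 1) (2 * n - 1) := by
    ext x; simp only [Finset.mem_Icc, Finset.mem_union]; omega
  have hd1 : Disjoint (Finset.Icc 1 (n - 1)) (Finset.Icc n n) := by
    rw [Finset.disjoint_left]; intro x; simp only [Finset.mem_Icc]; omega
  have hd2 : Disjoint (Finset.Icc 1 (n - 1) ∪ Finset.Icc n n) (Finset.Icc (n + 1) (2 * n - 1)) := by
    rw [Finset.disjoint_left]; intro x; simp only [Finset.mem_Icc, Finset.mem_union]; omega
  rw [hsplit, Finset.prod_union hd2, Finset.prod_union hd1, Finset.Icc_self,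
    Finset.prod_singleton, hζn] at hbig
  have hrefl : ∏ r ∈ Finset.Icc 1 (n - 1), (1 - ζ ^ (2 * n - r))
      = ∏ r ∈ Finset.Icc (n + 1) (2 * n - 1), (1 - ζ ^ r) := by
    apply Finset.prod_nbij' (fun r => 2 * n - r) (fun r => 2 * n - r) <;>
      intros <;> simp_all only [Finset.mem_Icc] <;> first | omega | rfl
  rw [← hrefl] at hbig
  have hpt : ∀ r ∈ Finset.Icc 1 (n - 1), (2 - ζ ^ r - (ζ ^ r)⁻¹)
      = (1 - ζ ^ r) * (1 - ζ ^ (2 * n - r)) := by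
    intro r hr
    rw [Finset.mem_Icc] at hr
    have hinv : ζ ^ (2 * n - r) = (ζ ^ r)⁻¹ := by
      apply eq_inv_of_mul_eq_one_left
      rw [← pow_add, show 2 * n - r + r = 2 * n from by omega, hζN]
    have hne : ζ ^ r ≠ 0 := pow_ne_zero _ hζ0
    rw [hinv]
    field_simp
    ring
  have hP : ∏ r ∈ Finset.Icc 1 (n - 1), (2 - ζ ^ r - (ζ ^ r)⁻¹)
      = (∏ r ∈ Finset.Icc 1 (n - 1), (1 - ζ ^ r))
        * ∏ r ∈ Finset.Icc 1 (n - 1), (1 - ζ ^ (2 * n - r)) := by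
    rw [← Finset.prod_mul_distrib]
    exact Finset.prod_congr rfl hpt
  have h2P : (2 : ℂ) * ∏ r ∈ Finset.Icc 1 (n - 1), (2 - ζ ^ r - (ζ ^ r)⁻¹) = ((2 * n : ℕ) : ℂ) := by
    rw [hP, ← hbig]; ring
  push_cast at h2P
  linear_combination h2P / 2


lemma pow_val_eq {N : ℕ} [NeZero N] {ν : ℂ} (hν : IsPrimitiveRoot ν N) (a : ℕ) :
    ν ^ (ZMod.val ((a : ZMod N))) = ν ^ a := by
  rw [ZMod.val_natCast, hν.eq_orderOf]
  exact pow_mod_orderOf ..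

lemma Sset_subset {N : ℕ} [NeZero N] {μ ν : ℂ} (hμ : IsPrimitiveRoot μ N)
    (hν : IsPrimitiveRoot ν N) :
    {z : ℂ | ∃ i : ZMod N, i ≠ 0 ∧ z = μ ^ i.val + (μ ^ i.val)⁻¹}
      ⊆ {z : ℂ | ∃ i : ZMod N, i ≠ 0 ∧ z = ν ^ i.val + (ν ^ i.val)⁻¹} := by
  rintro z ⟨i, hi, rfl⟩
  obtain ⟨k, hk, hkμ⟩ := hν.eq_pow_of_pow_eq_one hμ.pow_eq_one
  refine ⟨((k * i.val : ℕ) : ZMod N), ?_, ?_⟩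
  · intro h
    rw [ZMod.natCast_eq_zero_iff] at h
    have h1 : ν ^ (k * i.val) = 1 := (hν.pow_eq_one_iff_dvd _).mpr h
    rw [pow_mul, hkμ] at h1
    have h2 := (hμ.pow_eq_one_iff_dvd _).mp h1
    have h3 : i.val < N := ZMod.val_lt i
    have h4 : i.val = 0 := by
      rcases Nat.eq_zero_or_pos i.val with h' | h'
      · exact h'
      · exact absurd (Nat.le_of_dvd h' h2) (by omega)
    exact hi ((ZMod.val_eq_zero i).mp h4)
  · rw [pow_val_eq hν, pow_mul, hkμ]

lemma Sset_eq {N : ℕ} [NeZero N] {μ ν : ℂ} (hμ : IsPrimitiveRoot μ N)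
    (hν : IsPrimitiveRoot ν N) :
    {z : ℂ | ∃ i : ZMod N, i ≠ 0 ∧ z = μ ^ i.val + (μ ^ i.val)⁻¹}
      = {z : ℂ | ∃ i : ZMod N, i ≠ 0 ∧ z = ν ^ i.val + (ν ^ i.val)⁻¹} :=
  Set.Subset.antisymm (Sset_subset hμ hν) (Sset_subset hν hμ)

lemma SsetB (n : ℕ) (hn : 2 ≤ n) {ζ : ℂ} (hζ : IsPrimitiveRoot ζ (2 * n)) :
    {z : ℂ | ∃ i : ZMod (2 * n), i ≠ 0 ∧ z = ζ ^ i.val + (ζ ^ i.val)⁻¹}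
      = insert (-2) ((fun r : ℕ => ζ ^ r + (ζ ^ r)⁻¹) '' (Set.Icc 1 (n - 1))) := by
  haveI : NeZero (2 * n) := ⟨by omega⟩
  have hζN : ζ ^ (2 * n) = 1 := hζ.pow_eq_one
  have hζn : ζ ^ n = -1 := by
    have h2 : (ζ ^ n) ^ 2 = 1 := by rw [← pow_mul, mul_comm n 2]; exact hζN
    have h : (ζ ^ n - 1) * (ζ ^ n + 1) = 0 := by linear_combination h2
    rcases mul_eq_zero.mp h with h | h
    · exfalso
      have h' := (hζ.pow_eq_one_iff_dvd n).mp (sub_eq_zero.mp h)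
      have := Nat.le_of_dvd (by omega) h'
      omega
    · exact eq_neg_of_add_eq_zero_left h
  have hinv : ∀ r : ℕ, r ≤ 2 * n → ζ ^ (2 * n - r) = (ζ ^ r)⁻¹ := by
    intro r hr
    apply eq_inv_of_mul_eq_one_left
    rw [← pow_add, show 2 * n - r + r = 2 * n from by omega, hζN]
  ext z
  simp only [Set.mem_setOf_eq, Set.mem_insert_iff, Set.mem_image, Set.mem_Icc]
  constructor
  · rintro ⟨i, hi, rfl⟩
    have hvlt : i.val < 2 * n := ZMod.val_lt i
    have hvpos : 0 < i.val := by
      rcases Nat.eq_zero_or_pos i.val with h | h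
      · exact absurd ((ZMod.val_eq_zero i).mp h) hi
      · exact h
    rcases lt_trichotomy i.val n with h | h | h
    · right; exact ⟨i.val, ⟨by omega, by omega⟩, rfl⟩
    · left
      rw [h, hζn]
      norm_num
    · right
      refine ⟨2 * n - i.val, ⟨by omega, by omega⟩, ?_⟩
      rw [hinv i.val (by omega), inv_inv, add_comm]
  · rintro (rfl | ⟨r, ⟨hr1, hr2⟩, rfl⟩)
    · refine ⟨((n : ℕ) : ZMod (2 * n)), ?_, ?_⟩
      · intro h
        rw [ZMod.natCast_eq_zero_iff] at h
        have := Nat.le_of_dvd (by omega) h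
        omega
      · rw [pow_val_eq hζ, hζn]
        norm_num
    · refine ⟨((r : ℕ) : ZMod (2 * n)), ?_, ?_⟩
      · intro h
        rw [ZMod.natCast_eq_zero_iff] at h
        have := Nat.le_of_dvd (by omega) h
        omega
      · rw [pow_val_eq hζ]


open QuaternionGroup in
/-- for `m` divisible by 4 and a faithful irreducible character `ψ` of
degree 2 of the generalized quaternion (dicyclic) group `Q_{2m}` of order `2m`
(realized as `QuaternionGroup (m/2)` in Mathlib), `(Q_{2m}, ψ)` is sharp of type
`L = {−2, 0} ∪ {ω^r + ω^{−r} : 1 ≤ r ≤ m/2 − 1}`, `ω = e^{2πi/m}`. -/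
theorem stmt13 (m : ℕ) (hm : 0 < m) (hdiv : 4 ∣ m) [NeZero (m / 2)]
    (V : FDRep ℂ (QuaternionGroup (m / 2))) [Simple V]
    (hfaith : Function.Injective V.ρ) (hdeg : V.character 1 = 2) :
    IsSharp (QuaternionGroup (m / 2)) V.character
      (insert (-2) (insert 0 ((Finset.Icc 1 (m / 2 - 1)).image
        (fun r : ℕ => Complex.exp (2 * Real.pi * Complex.I / m) ^ (r : ℤ) +
          Complex.exp (2 * Real.pi * Complex.I / m) ^ (-(r : ℤ)))))) := by
  obtain ⟨t, htm⟩ := hdiv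
  have ht : 0 < t := by omega
  have hnt : m / 2 = 2 * t := by omega
  have hn2 : 2 ≤ m / 2 := by omega
  have hN : 2 * (m / 2) = m := by omega
  set ζ : ℂ := Complex.exp (2 * Real.pi * Complex.I / m) with hζdef
  have hζ : IsPrimitiveRoot ζ (2 * (m / 2)) := by
    rw [hζdef, show (m : ℂ) = ((2 * (m / 2) : ℕ) : ℂ) from by exact_mod_cast hN.symm]
    exact Complex.isPrimitiveRoot_exp _ (by omega)
  have hζ0 : ζ ≠ 0 := hζ.ne_zero (by omega)
  have hζn : ζ ^ (m / 2) = -1 := by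
    apply pm_one
    · rw [← pow_mul, mul_comm (m / 2) 2]; exact hζ.pow_eq_one
    · intro h
      have h' := (hζ.pow_eq_one_iff_dvd (m / 2)).mp h
      have := Nat.le_of_dvd (by omega) h'
      omega
  have hdeg' : Module.finrank ℂ V = 2 := by
    have h1 : ((Module.finrank ℂ V : ℕ) : ℂ) = 2 := by
      rw [← FDRep.char_one]; exact hdeg
    exact_mod_cast h1
  obtain ⟨lam, hlam, hchar_a, hchar_xa⟩ := quatChar (m / 2) hn2 V hfaith hdeg'
  have hfset : (fun r : ℕ => ζ ^ (r : ℤ) + ζ ^ (-(r : ℤ)))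
      = (fun r : ℕ => ζ ^ r + (ζ ^ r)⁻¹) := by
    funext r
    rw [zpow_neg, zpow_natCast]
  rw [hfset]
  refine ⟨?_, ?_⟩
  · -- value set
    have hRHS : {z : ℂ | ∃ g : QuaternionGroup (m / 2), g ≠ 1 ∧ V.character g = z}
        = {z : ℂ | ∃ i : ZMod (2 * (m / 2)), i ≠ 0 ∧ z = lam ^ i.val + (lam ^ i.val)⁻¹}
          ∪ {0} := by
      ext z
      simp only [Set.mem_setOf_eq, Set.mem_union, Set.mem_singleton_iff]
      constructor
      · rintro ⟨g, hg, rfl⟩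
        cases g with
        | a i =>
          left
          refine ⟨i, fun h => hg (by rw [h, one_def]), hchar_a i⟩
        | xa i => right; exact hchar_xa i
      · rintro (⟨i, hi, rfl⟩ | rfl)
        · refine ⟨QuaternionGroup.a i, fun h => hi ?_, hchar_a i⟩
          rw [one_def] at h
          injection h
        · refine ⟨QuaternionGroup.xa 0, fun h => ?_, hchar_xa 0⟩
          rw [one_def] at h
          cases h
    rw [hRHS, Sset_eq hlam hζ, SsetB (m / 2) hn2 hζ, Finset.coe_insert, Finset.coe_insert,
      Finset.coe_image, Finset.coe_Icc]
    ext z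
    simp only [Set.mem_insert_iff, Set.mem_union, Set.mem_singleton_iff]
    tauto
  · -- the product
    rw [hdeg]
    have h0T : (0 : ℂ) ∈ (Finset.Icc 1 (m / 2 - 1)).image (fun r : ℕ => ζ ^ r + (ζ ^ r)⁻¹) := by
      rw [Finset.mem_image]
      refine ⟨t, by rw [Finset.mem_Icc]; omega, ?_⟩
      have hx2 : (ζ ^ t) * (ζ ^ t) = -1 := by
        rw [← pow_add, show t + t = m / 2 from by omega, hζn]
      have hxinv : (ζ ^ t)⁻¹ = -(ζ ^ t) := by
        apply inv_eq_of_mul_eq_one_right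
        rw [mul_neg, hx2, neg_neg]
      rw [hxinv]
      ring
    have h2T : (-2 : ℂ) ∉ (Finset.Icc 1 (m / 2 - 1)).image (fun r : ℕ => ζ ^ r + (ζ ^ r)⁻¹) := by
      rw [Finset.mem_image]
      rintro ⟨r, hr, hfr⟩
      rw [Finset.mem_Icc] at hr
      have hrne : ζ ^ r ≠ 0 := pow_ne_zero _ hζ0
      have hsq : (ζ ^ r + 1) ^ 2 = ζ ^ r * (ζ ^ r + (ζ ^ r)⁻¹ + 2) := by
        field_simp
        ring
      rw [hfr] at hsq
      have hzr : ζ ^ r = -1 := by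
        have h0 : (ζ ^ r + 1) ^ 2 = 0 := by rw [hsq]; ring
        have h1 := pow_eq_zero_iff (two_ne_zero) |>.mp h0
        exact eq_neg_of_add_eq_zero_left h1
      rw [← hζn] at hzr
      have := hζ.pow_inj (by omega) (by omega) hzr
      omega
    rw [Finset.insert_eq_self.mpr h0T, Finset.prod_insert h2T]
    have hinj : ∀ x ∈ Finset.Icc 1 (m / 2 - 1), ∀ y ∈ Finset.Icc 1 (m / 2 - 1),
        ζ ^ x + (ζ ^ x)⁻¹ = ζ ^ y + (ζ ^ y)⁻¹ → x = y := by
      intro x hx y hy hxy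
      rw [Finset.mem_Icc] at hx hy
      have hxne : ζ ^ x ≠ 0 := pow_ne_zero _ hζ0
      have hyne : ζ ^ y ≠ 0 := pow_ne_zero _ hζ0
      have key : (ζ ^ x - ζ ^ y) * (1 - (ζ ^ x * ζ ^ y)⁻¹) = 0 := by
        have expand : (ζ ^ x - ζ ^ y) * (1 - (ζ ^ x * ζ ^ y)⁻¹)
            = ζ ^ x + (ζ ^ x)⁻¹ - (ζ ^ y + (ζ ^ y)⁻¹) := by
          field_simp
          ring
        rw [expand, hxy, sub_self]
      rcases mul_eq_zero.mp key with h | h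
      · exact hζ.pow_inj (by omega) (by omega) (sub_eq_zero.mp h)
      · exfalso
        have h1 : ζ ^ (x + y) = 1 := by
          have h2 : (ζ ^ x * ζ ^ y)⁻¹ = 1 := (sub_eq_zero.mp h).symm
          rw [pow_add]
          rw [inv_eq_one] at h2
          exact h2
        have h3 := (hζ.pow_eq_one_iff_dvd _).mp h1
        have := Nat.le_of_dvd (by omega) h3
        omega
    rw [Finset.prod_image hinj]
    have hcongr : ∏ r ∈ Finset.Icc 1 (m / 2 - 1), ((2 : ℂ) - (ζ ^ r + (ζ ^ r)⁻¹))
        = ∏ r ∈ Finset.Icc 1 (m / 2 - 1), ((2 : ℂ) - ζ ^ r - (ζ ^ r)⁻¹) :=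
      Finset.prod_congr rfl (fun r _ => by ring)
    rw [hcongr, key_prod hn2 hζ, QuaternionGroup.card]
    push_cast
    ring
end

section
/- Let m be even, let ψ be a faithful irreducible character of degree 2 of the dihedral group D_{2m} of order 2m, and let ε be the linear character of D_{2m} whose kernel is the cyclic subgroup of rotations of order m. Then (D_{2m}, ψ + ε) is sharp of type L = {−1} ∪ {1 + ω^r + ω^{−r} : 1 ≤ r ≤ m/2 − 1}, where ω = e^{2πi/m}. -/
open CategoryTheory

namespace Aux14

abbrev M2 := Matrix (Fin 2) (Fin 2) ℂ

lemma cayley (A : M2) : A * A = A.trace • A - A.det • 1 := by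
  ext i j
  fin_cases i <;> fin_cases j <;>
    simp [Matrix.mul_apply, Matrix.trace_fin_two, Matrix.det_fin_two, Fin.sum_univ_two,
      Matrix.one_apply] <;> ring

lemma scalar_sq (c : ℂ) (h : (c • (1 : M2)) * (c • (1 : M2)) = 1) : c * c = 1 := by
  have := congrArg (fun M : M2 => M 0 0) h
  simpa [Matrix.smul_mul, Matrix.mul_smul, smul_smul, Matrix.one_apply] using this

lemma inv_dichotomy (A : M2) (h : A * A = 1) : A.trace = 0 ∨ ∃ c : ℂ, c * c = 1 ∧ A = c • 1 := by
  by_cases ht : A.trace = 0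
  · exact Or.inl ht
  · right
    have hc := cayley A
    rw [h] at hc
    have hA : A = ((A.trace)⁻¹ * (1 + A.det)) • (1 : M2) := by
      rw [eq_comm, mul_smul, inv_smul_eq_iff₀ ht]
      rw [eq_sub_iff_add_eq] at hc
      rw [← hc]; module
    exact ⟨_, scalar_sq _ (by rw [← hA]; exact h), hA⟩

lemma det_of_trace_zero_inv (A : M2) (h : A * A = 1) (ht : A.trace = 0) : A.det = -1 := by
  have hc := cayley A
  rw [h, ht, zero_smul, zero_sub] at hc
  have := congrArg Matrix.trace hc
  simp [Matrix.trace_fin_two, Matrix.one_apply] at this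
  linear_combination this / 2

lemma trace_pow (A : M2) (u v : ℂ) (ht : A.trace = u + v) (hd : A.det = u * v) :
    ∀ j : ℕ, (A ^ j).trace = u ^ j + v ^ j := by
  have key : ∀ j : ℕ, (A ^ j).trace = u ^ j + v ^ j ∧ (A ^ (j+1)).trace = u ^ (j+1) + v ^ (j+1) := by
    intro j
    induction j with
    | zero =>
      refine ⟨?_, by simpa using ht⟩
      simp [Matrix.trace_one]
      norm_num
    | succ k ih =>
      refine ⟨ih.2, ?_⟩
      have hpow : A ^ (k + 2) = A.trace • A ^ (k+1) - A.det • A ^ k := by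
        have : A ^ (k + 2) = (A * A) * A ^ k := by
          rw [show k + 2 = 2 + k from by omega, pow_add, sq]
        rw [this, cayley, Matrix.sub_mul, Matrix.smul_mul, Matrix.smul_mul, one_mul,
          ← pow_succ']
      rw [hpow, Matrix.trace_sub, Matrix.trace_smul, Matrix.trace_smul, ih.1, ih.2, ht, hd,
        smul_eq_mul, smul_eq_mul]
      ring
  exact fun j => (key j).1

lemma pow_proj (A : M2) (u v : ℂ) (ht : A.trace = u + v) (hd : A.det = u * v) (j : ℕ) :
    (u - v) • A ^ j = u ^ j • (A - v • 1) - v ^ j • (A - u • 1) := by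
  have hAQ : ∀ w w' : ℂ, A.trace = w + w' → A.det = w * w' →
      A * (A - w' • 1) = w • (A - w' • 1) := by
    intro w w' h1 h2
    rw [Matrix.mul_sub, Matrix.mul_smul, mul_one, cayley, h1, h2]
    module
  induction j with
  | zero => simp only [pow_zero]; module
  | succ k ih =>
    have : A * ((u - v) • A ^ k) = (u - v) • A ^ (k + 1) := by
      rw [Matrix.mul_smul, ← pow_succ']
    rw [← this, ih, Matrix.mul_sub, Matrix.mul_smul, Matrix.mul_smul,
      hAQ u v ht hd, hAQ v u (by rw [ht]; ring) (by rw [hd]; ring)]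
    rw [smul_smul, smul_smul, pow_succ, pow_succ]

lemma pow_eq_one (A : M2) (u v : ℂ) (huv : u ≠ v) (ht : A.trace = u + v) (hd : A.det = u * v)
    (j : ℕ) (hu : u ^ j = 1) (hv : v ^ j = 1) : A ^ j = 1 := by
  have h := pow_proj A u v ht hd j
  rw [hu, hv, one_smul, one_smul] at h
  have h2 : (u - v) • A ^ j = (u - v) • (1 : M2) := by rw [h]; module
  exact smul_right_injective _ (sub_ne_zero.mpr huv) h2

lemma scalar_of_double_root (A : M2) (u : ℂ) (ht : A.trace = u + u) (hd : A.det = u * u)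
    (k : ℕ) (hA : A ^ (k + 1) = 1) : A = u • 1 := by
  have key : ∀ j : ℕ, A ^ (j + 1) = u ^ (j + 1) • 1 + ((j + 1 : ℕ) * u ^ j) • (A - u • 1) := by
    intro j
    induction j with
    | zero => simp only [zero_add, pow_one, pow_zero, Nat.cast_one]; module
    | succ i ih =>
      have h2 : A ^ (i + 1 + 1) = A * A ^ (i + 1) := (pow_succ' A _)
      have hN : A * (A - u • 1) = u • (A - u • 1) := by
        rw [Matrix.mul_sub, Matrix.mul_smul, mul_one, cayley, ht, hd]
        module
      rw [h2, ih, Matrix.mul_add, Matrix.mul_smul, Matrix.mul_smul, hN, mul_one]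
      push_cast
      match_scalars <;> ring
  have hm := key k
  rw [hA] at hm
  have htr := congrArg Matrix.trace hm
  have htrN : Matrix.trace (A - u • 1) = 0 := by
    rw [Matrix.trace_sub, Matrix.trace_smul, ht, Matrix.trace_one]
    simp; ring
  rw [Matrix.trace_add, Matrix.trace_smul, Matrix.trace_smul, htrN, Matrix.trace_one] at htr
  simp only [smul_eq_mul, mul_zero, add_zero, Matrix.trace_one] at htr
  have hu1 : u ^ (k + 1) = 1 := by
    have h2 : (2 : ℂ) = u ^ (k + 1) * 2 := by simpa using htr
    linear_combination -h2 / 2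
  have hu0 : u ≠ 0 := by
    intro h0
    rw [h0, zero_pow (Nat.succ_ne_zero k)] at hu1
    exact zero_ne_one hu1
  rw [hu1, one_smul] at hm
  have hN0 : ((k + 1 : ℕ) * u ^ k : ℂ) • (A - u • 1) = 0 := by
    have := hm.symm
    rwa [add_eq_left] at this
  have hc : ((k + 1 : ℕ) * u ^ k : ℂ) ≠ 0 :=
    mul_ne_zero (Nat.cast_ne_zero.mpr (Nat.succ_ne_zero k)) (pow_ne_zero _ hu0)
  have := (smul_eq_zero.mp hN0).resolve_left hc
  rw [sub_eq_zero] at this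
  exact this

lemma invol_cases (A : M2) (h : A * A = 1) :
    (A.trace = 0 ∧ A.det = -1) ∨ A.trace * A.trace = 4 := by
  rcases inv_dichotomy A h with h0 | ⟨c, hc, hA⟩
  · exact Or.inl ⟨h0, det_of_trace_zero_inv A h h0⟩
  · right
    rw [hA, Matrix.trace_smul, Matrix.trace_one]
    simp only [smul_eq_mul, Fintype.card_fin, Nat.cast_ofNat]
    linear_combination 4 * hc

lemma char_sum (m : ℕ) [NeZero m] (V : FDRep ℂ (DihedralGroup m)) [Simple V] :
    (∑ g : DihedralGroup m, V.character g * V.character g⁻¹) = 2 * m := by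
  have e : ((Fintype.card (DihedralGroup m) : ℕ) : ℂ) ≠ 0 := by
    rw [DihedralGroup.card]; simp [NeZero.ne m]
  have horth := FDRep.char_orthonormal V V
  rw [if_pos ⟨Iso.refl V⟩, Nat.card_eq_fintype_card, inv_mul_eq_iff_eq_mul₀ e] at horth
  rw [horth, DihedralGroup.card]; push_cast; ring

open Finset in
lemma pow_half {m n' : ℕ} (h : m = 2 * n') (hn : 1 ≤ n') {ω : ℂ}
    (hω : IsPrimitiveRoot ω m) : ω ^ n' = -1 := by
  have h2 : ω ^ n' * ω ^ n' = 1 := by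
    rw [← pow_add]
    rw [show n' + n' = m by omega]
    exact hω.pow_eq_one
  rcases mul_self_eq_one_iff.mp h2 with h1 | h1
  · exact absurd h1 (hω.pow_ne_one_of_pos_of_lt (by omega) (by omega))
  · exact h1

open Finset in
lemma prod_target {m n' : ℕ} (h : m = 2 * n') (hn : 1 ≤ n') {ω : ℂ}
    (hω : IsPrimitiveRoot ω m) :
    ∏ r ∈ Finset.Icc 1 (n' - 1), (2 - ω ^ r - (ω ^ r)⁻¹) = (n' : ℂ) := by
  have hm0 : m ≠ 0 := by omega
  have hω0 : ∀ r : ℕ, ω ^ r ≠ 0 := fun r => pow_ne_zero r (hω.ne_zero hm0)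
  have hωn : ω ^ n' = -1 := pow_half h hn hω
  obtain ⟨k, hk⟩ : ∃ k, m = k + 1 := ⟨m - 1, by omega⟩
  have htot : ∏ r ∈ Finset.Ico 1 m, (1 - ω ^ r) = (m : ℂ) := by
    have := (hk ▸ hω).prod_one_sub_pow_eq_order
    rw [Finset.prod_Ico_eq_prod_range]
    rw [show m - 1 = k from by omega]
    rw [show ((m:ℕ):ℂ) = (k:ℂ) + 1 by rw [hk]; push_cast; ring, ← this]
    refine Finset.prod_congr rfl fun i _ => by rw [add_comm 1 i]
  have hsplit : (∏ r ∈ Finset.Ico 1 n', (1 - ω ^ r)) * ∏ r ∈ Finset.Ico n' m, (1 - ω ^ r)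
      = (m : ℂ) := by rw [Finset.prod_Ico_consecutive _ (by omega) (by omega)]; exact htot
  have hbot : ∏ r ∈ Finset.Ico n' m, (1 - ω ^ r)
      = (1 - ω ^ n') * ∏ r ∈ Finset.Ico (n' + 1) m, (1 - ω ^ r) :=
    Finset.prod_eq_prod_Ico_succ_bot (by omega) _
  have hup : ∏ r ∈ Finset.Ico (n' + 1) m, (1 - ω ^ r)
      = ∏ r ∈ Finset.Ico 1 n', (1 - (ω ^ r)⁻¹) := by
    refine Finset.prod_nbij' (fun r => m - r) (fun r => m - r) ?_ ?_ ?_ ?_ ?_ <;>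
      intro a ha <;> simp only [Finset.mem_Ico] at ha ⊢
    · omega
    · omega
    · omega
    · omega
    · congr 1
      refine eq_inv_of_mul_eq_one_left ?_
      rw [← pow_add, show a + (m - a) = m from by omega]
      exact hω.pow_eq_one
  have h2' : (1 : ℂ) - ω ^ n' = 2 := by rw [hωn]; ring
  have hIcc : Finset.Icc 1 (n' - 1) = Finset.Ico 1 n' := by
    ext x; simp only [Finset.mem_Icc, Finset.mem_Ico]; omega
  have hfac : ∀ r : ℕ, (2 : ℂ) - ω ^ r - (ω ^ r)⁻¹ = (1 - ω ^ r) * (1 - (ω ^ r)⁻¹) := by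
    intro r
    have hz : ω ^ r * (ω ^ r)⁻¹ = 1 := mul_inv_cancel₀ (hω0 r)
    linear_combination (-1 : ℂ) * hz
  rw [hIcc]
  have hT : ∏ r ∈ Finset.Ico 1 n', ((2:ℂ) - ω ^ r - (ω ^ r)⁻¹)
      = (∏ r ∈ Finset.Ico 1 n', (1 - ω ^ r)) * ∏ r ∈ Finset.Ico 1 n', (1 - (ω ^ r)⁻¹) := by
    rw [← Finset.prod_mul_distrib]
    exact Finset.prod_congr rfl fun r _ => hfac r
  rw [hbot, hup, h2'] at hsplit
  rw [hT]
  have hmc : (m : ℂ) = 2 * n' := by rw [h]; push_cast; ring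
  rw [hmc] at hsplit
  linear_combination hsplit / 2

open DihedralGroup in
lemma two_case (V : FDRep ℂ (DihedralGroup 2)) [Simple V]
    (hfaith : Function.Injective V.ρ) (hdeg : V.character 1 = 2) : False := by
  classical
  have hfr : Module.finrank ℂ V = 2 := by
    have h1 := FDRep.char_one V
    rw [hdeg] at h1
    exact_mod_cast h1.symm
  let b : Module.Basis (Fin 2) ℂ V := Module.finBasisOfFinrankEq ℂ V hfr
  let Φ := LinearMap.toMatrixAlgEquiv b
  let Dm : DihedralGroup 2 →* Aux14.M2 :=
    { toFun := fun g => Φ (V.ρ g)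
      map_one' := by simp [Φ]
      map_mul' := fun g h => by simp [Φ, map_mul] }
  have hDtr : ∀ g, V.character g = (Dm g).trace := by
    intro g
    rw [FDRep.character, LinearMap.trace_eq_matrix_trace ℂ b]
    rfl
  have hsr_sq : ∀ j : ZMod 2, Dm (sr j) * Dm (sr j) = 1 := by
    intro j
    rw [← map_mul, sr_mul_sr, sub_self, ← one_def, map_one]
  have hr1 : Dm (r 1) * Dm (r 1) = 1 := by
    rw [← map_mul, r_mul_r, show (1 + 1 : ZMod 2) = 0 from by decide,
      ← one_def, map_one]
  have hsum := Aux14.char_sum 2 V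
  have huniv : (Finset.univ : Finset (DihedralGroup 2)) =
      {r 0, r 1, sr 0, sr 1} := by decide
  have hinv : ∀ g : DihedralGroup 2, g⁻¹ = g := by decide
  rw [huniv, Finset.sum_insert (by decide), Finset.sum_insert (by decide),
    Finset.sum_insert (by decide), Finset.sum_singleton] at hsum
  simp only [hinv] at hsum
  have hc0 : V.character (r 0) = 2 := by
    rw [← one_def, hdeg]
  have d1 := Aux14.invol_cases _ hr1
  have d2 := Aux14.invol_cases _ (hsr_sq 0)
  have d3 := Aux14.invol_cases _ (hsr_sq 1)
  rw [hc0] at hsum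
  rw [← hDtr] at d1 d2 d3
  have hdetmul : (Dm (r 1)).det * (Dm (sr 0)).det = (Dm (sr 1)).det := by
    rw [← Matrix.det_mul, ← map_mul, r_mul_sr,
      show ((0 : ZMod 2) - 1) = 1 from by decide]
  rcases d1 with ⟨ht1, hd1⟩ | h1
  · rcases d2 with ⟨ht2, hd2⟩ | h2'
    · rcases d3 with ⟨ht3, hd3⟩ | h3
      · rw [hd1, hd2, hd3] at hdetmul; norm_num at hdetmul
      · rw [ht1, ht2, h3] at hsum; norm_num at hsum
    · rcases d3 with ⟨ht3, hd3⟩ | h3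
      · rw [ht1, h2', ht3] at hsum; norm_num at hsum
      · rw [ht1, h2', h3] at hsum; norm_num at hsum
  · rcases d2 with ⟨ht2, hd2⟩ | h2'
    · rcases d3 with ⟨ht3, hd3⟩ | h3
      · rw [h1, ht2, ht3] at hsum; norm_num at hsum
      · rw [h1, ht2, h3] at hsum; norm_num at hsum
    · rcases d3 with ⟨ht3, hd3⟩ | h3
      · rw [h1, h2', ht3] at hsum; norm_num at hsum
      · rw [h1, h2', h3] at hsum; norm_num at hsum

end Aux14

theorem stmt14 (m : ℕ) (hm : 0 < m) (heven : Even m) [NeZero m]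
    (V : FDRep ℂ (DihedralGroup m)) [Simple V]
    (hfaith : Function.Injective V.ρ) (hdeg : V.character 1 = 2)
    (ε : DihedralGroup m →* ℂˣ)
    (hker : (ε.ker : Set (DihedralGroup m)) = Set.range DihedralGroup.r) :
    IsSharp (DihedralGroup m) (fun g => V.character g + ((ε g : ℂˣ) : ℂ))
      (insert (-1) ((Finset.Icc 1 (m / 2 - 1)).image
        (fun r : ℕ => 1 + Complex.exp (2 * Real.pi * Complex.I / m) ^ (r : ℤ) +
          Complex.exp (2 * Real.pi * Complex.I / m) ^ (-(r : ℤ))))) := by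
  classical
  have hm0 : m ≠ 0 := NeZero.ne m
  have hm2 : 2 ≤ m := by
    rcases heven with ⟨c, hc⟩; omega
  -- basis and matrix realization
  have hfr : Module.finrank ℂ V = 2 := by
    have h1 := FDRep.char_one V
    rw [hdeg] at h1
    exact_mod_cast h1.symm
  let b : Module.Basis (Fin 2) ℂ V := Module.finBasisOfFinrankEq ℂ V hfr
  let Φ := LinearMap.toMatrixAlgEquiv b
  let Dm : DihedralGroup m →* Aux14.M2 :=
    { toFun := fun g => Φ (V.ρ g)
      map_one' := by simp [Φ]
      map_mul' := fun g h => by simp [Φ, map_mul] }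
  have hDinj : Function.Injective Dm := by
    intro g h e
    exact hfaith ((LinearMap.toMatrixAlgEquiv b).injective e)
  have hDtr : ∀ g, V.character g = (Dm g).trace := by
    intro g
    rw [FDRep.character, LinearMap.trace_eq_matrix_trace ℂ b]
    rfl
  -- epsilon values
  have hker' : ∀ g, ε g = 1 ↔ g ∈ Set.range DihedralGroup.r := by
    intro g
    rw [← hker, SetLike.mem_coe, MonoidHom.mem_ker]
  have hε_r : ∀ i : ZMod m, ((ε (DihedralGroup.r i) : ℂˣ) : ℂ) = 1 := by
    intro i
    rw [(hker' _).mpr ⟨i, rfl⟩, Units.val_one]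
  have hε_sr : ∀ j : ZMod m, ((ε (DihedralGroup.sr j) : ℂˣ) : ℂ) = -1 := by
    intro j
    have hsq : ((ε (DihedralGroup.sr j) : ℂˣ) : ℂ) * ((ε (DihedralGroup.sr j) : ℂˣ) : ℂ) = 1 := by
      rw [← Units.val_mul, ← map_mul, DihedralGroup.sr_mul_sr, sub_self,
        ← DihedralGroup.one_def, map_one, Units.val_one]
    rcases mul_self_eq_one_iff.mp hsq with h1 | h1
    · exfalso
      have h2 : ε (DihedralGroup.sr j) = 1 := by
        ext; rw [h1, Units.val_one]
      obtain ⟨i, hi⟩ := (hker' _).mp h2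
      simp at hi
    · exact h1
  -- involutivity of reflections
  have hsr_sq : ∀ j : ZMod m, Dm (DihedralGroup.sr j) * Dm (DihedralGroup.sr j) = 1 := by
    intro j
    rw [← map_mul, DihedralGroup.sr_mul_sr, sub_self, ← DihedralGroup.one_def, map_one]
  rcases eq_or_lt_of_le hm2 with h2 | h2
  · exfalso
    subst h2
    exact Aux14.two_case V hfaith hdeg
  · -- 2 < m : main case
    -- the rotation matrix A
    set A : Aux14.M2 := Dm (DihedralGroup.r 1) with hA_def
    have hApow : ∀ j : ℕ, A ^ j = Dm (DihedralGroup.r (j : ZMod m)) := by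
      intro j
      rw [hA_def, ← map_pow, DihedralGroup.r_one_pow]
    have hAm : A ^ m = 1 := by
      rw [hApow, ZMod.natCast_self, ← DihedralGroup.one_def, map_one]
    have hord : ∀ j : ℕ, A ^ j = 1 → m ∣ j := by
      intro j hj
      have h4 : Dm (DihedralGroup.r (j : ZMod m)) = Dm 1 := by rw [map_one, ← hApow j, hj]
      have h5 := hDinj h4
      rw [DihedralGroup.one_def] at h5
      have h6 : (j : ZMod m) = 0 := DihedralGroup.r.inj h5
      exact (ZMod.natCast_eq_zero_iff j m).mp h6
    have hnot2 : ¬ (m ∣ 2) := fun hdvd => by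
      have := Nat.le_of_dvd (by norm_num) hdvd; omega
    -- conjugation by reflection
    have hBAB : Dm (DihedralGroup.sr 0) * A * Dm (DihedralGroup.sr 0)
        = Dm (DihedralGroup.r (-1)) := by
      rw [hA_def, ← map_mul, ← map_mul]
      congr 1
      rw [DihedralGroup.sr_mul_r, DihedralGroup.sr_mul_sr]
      congr 1
      ring
    have hAA' : A * (Dm (DihedralGroup.sr 0) * A * Dm (DihedralGroup.sr 0)) = 1 := by
      rw [hBAB, hA_def, ← map_mul, DihedralGroup.r_mul_r, add_neg_cancel,
        ← DihedralGroup.one_def, map_one]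
    have htr_inv : (Dm (DihedralGroup.sr 0) * A * Dm (DihedralGroup.sr 0)).trace = A.trace := by
      rw [Matrix.trace_mul_comm, ← mul_assoc, hsr_sq 0, one_mul]
    have hdB : (Dm (DihedralGroup.sr 0)).det * (Dm (DihedralGroup.sr 0)).det = 1 := by
      rw [← Matrix.det_mul, hsr_sq 0, Matrix.det_one]
    have hd2 : A.det * A.det = 1 := by
      have hdet := congrArg Matrix.det hAA'
      rw [Matrix.det_one, Matrix.det_mul, Matrix.det_mul, Matrix.det_mul] at hdet
      linear_combination hdet - A.det * A.det * hdB
    have htd : A.det * A.trace = A.trace := by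
      have h1 : A.trace • (1 : Aux14.M2)
          - A.det • (Dm (DihedralGroup.sr 0) * A * Dm (DihedralGroup.sr 0)) = A := by
        have h2 : A * A * (Dm (DihedralGroup.sr 0) * A * Dm (DihedralGroup.sr 0)) = A := by
          rw [mul_assoc, hAA', mul_one]
        rw [Aux14.cayley A, Matrix.sub_mul, Matrix.smul_mul, Matrix.smul_mul, one_mul,
          hAA'] at h2
        exact h2
      have h3 := congrArg Matrix.trace h1
      rw [Matrix.trace_sub, Matrix.trace_smul, Matrix.trace_smul, htr_inv, Matrix.trace_one] at h3
      simp only [smul_eq_mul, Fintype.card_fin, Nat.cast_ofNat] at h3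
      linear_combination -h3
    have hd1 : A.det = 1 := by
      by_contra hd
      have ht0 : A.trace = 0 := by
        rcases mul_eq_zero.mp (show (A.det - 1) * A.trace = 0 by linear_combination htd)
          with h4 | h4
        · exact absurd (by linear_combination h4) hd
        · exact h4
      have hdm1 : A.det = -1 := (mul_self_eq_one_iff.mp hd2).resolve_left hd
      have hAA2 : A * A = 1 := by
        rw [Aux14.cayley A, ht0, hdm1]
        module
      exact hnot2 (hord 2 (by rw [pow_two]; exact hAA2))
    -- eigenvalues
    obtain ⟨s, hs⟩ := IsAlgClosed.exists_pow_nat_eq (A.trace * A.trace - 4 * A.det)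
      (n := 2) (by norm_num)
    obtain ⟨u, v, huv_sum, huv_mul⟩ : ∃ u v : ℂ, u + v = A.trace ∧ u * v = A.det :=
      ⟨(A.trace + s)/2, (A.trace - s)/2, by ring, by linear_combination (-1/4 : ℂ) * hs⟩
    have ht : A.trace = u + v := huv_sum.symm
    have hd : A.det = u * v := huv_mul.symm
    rcases eq_or_ne u v with huv | huv
    · -- equal eigenvalues: A is scalar, contradiction
      exfalso
      obtain ⟨k, hk⟩ : ∃ k, m = k + 1 := ⟨m - 1, by omega⟩
      have hscal := Aux14.scalar_of_double_root A u (by rw [ht, huv]) (by rw [hd, huv]) k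
        (by rw [← hk]; exact hAm)
      have huu : u * u = 1 := by rw [huv] at huv_mul ⊢; rw [huv_mul, hd1]
      have hAA2 : A * A = 1 := by
        rw [hscal, Matrix.smul_mul, Matrix.mul_smul, one_mul, smul_smul, huu, one_smul]
      exact hnot2 (hord 2 (by rw [pow_two]; exact hAA2))
    · -- distinct eigenvalues
      have hum : u ^ m = 1 ∧ v ^ m = 1 := by
        have h1 : u ^ m + v ^ m = 2 := by
          have h3 := Aux14.trace_pow A u v ht hd m
          rw [hAm, Matrix.trace_one] at h3
          simpa using h3.symm
        have h2' : u ^ m * v ^ m = 1 := by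
          have h3 : (A ^ m).det = 1 := by rw [hAm, Matrix.det_one]
          rw [Matrix.det_pow, hd, mul_pow] at h3
          exact h3
        have h3 : (u ^ m - 1) * (v ^ m - 1) = 0 := by linear_combination h2' - h1
        rcases mul_eq_zero.mp h3 with h4 | h4
        · have h5 : u ^ m = 1 := by linear_combination h4
          exact ⟨h5, by linear_combination h1 - h5⟩
        · have h5 : v ^ m = 1 := by linear_combination h4
          exact ⟨by linear_combination h1 - h5, h5⟩
      have huv1 : u * v = 1 := by rw [huv_mul, hd1]
      have hv : v = u⁻¹ := eq_inv_of_mul_eq_one_right huv1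
      have hu_prim : IsPrimitiveRoot u m := by
        refine ⟨hum.1, ?_⟩
        intro l hl
        have hvl : v ^ l = 1 := by rw [hv, inv_pow, hl, inv_one]
        exact hord l (Aux14.pow_eq_one A u v huv ht hd l hl hvl)
      have hu0 : u ≠ 0 := hu_prim.ne_zero hm0
      have hpow_mod : ∀ x : ℕ, u ^ (x % m) = u ^ x := by
        intro x
        conv_rhs => rw [← Nat.mod_add_div x m]
        rw [pow_add, pow_mul, hu_prim.pow_eq_one, one_pow, mul_one]
      -- character values
      have hchar_r : ∀ i : ZMod m,
          V.character (DihedralGroup.r i) = u ^ i.val + (u ^ i.val)⁻¹ := by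
        intro i
        have h3 : DihedralGroup.r i = DihedralGroup.r 1 ^ i.val := by
          rw [DihedralGroup.r_one_pow, ZMod.natCast_rightInverse i]
        rw [hDtr, h3, map_pow]
        rw [show (Dm (DihedralGroup.r 1)) = A from rfl]
        rw [Aux14.trace_pow A u v ht hd i.val, hv, inv_pow]
      have hchar_sr : ∀ j : ZMod m, V.character (DihedralGroup.sr j) = 0 := by
        intro j
        rcases Aux14.inv_dichotomy _ (hsr_sq j) with h0 | ⟨c, hc, hscal⟩
        · rw [hDtr]; exact h0
        · exfalso
          rcases mul_self_eq_one_iff.mp hc with rfl | rfl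
          · have h4 : DihedralGroup.sr j = 1 := hDinj (by rw [hscal, one_smul, map_one])
            rw [DihedralGroup.one_def] at h4
            cases h4
          · have hcomm : Dm (DihedralGroup.sr j * DihedralGroup.r 1)
                = Dm (DihedralGroup.r 1 * DihedralGroup.sr j) := by
              rw [map_mul, map_mul, hscal, Matrix.smul_mul, Matrix.mul_smul, one_mul, mul_one]
            have h4 := hDinj hcomm
            rw [DihedralGroup.sr_mul_r, DihedralGroup.r_mul_sr] at h4
            have h6 : (j + 1 : ZMod m) = j - 1 := by simpa using h4
            have h7 : ((2 : ℕ) : ZMod m) = 0 := by push_cast; linear_combination h6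
            exact hnot2 ((ZMod.natCast_eq_zero_iff 2 m).mp h7)
      -- ω and n'
      have hω : IsPrimitiveRoot (Complex.exp (2 * Real.pi * Complex.I / m)) m :=
        Complex.isPrimitiveRoot_exp m hm0
      set ω : ℂ := Complex.exp (2 * Real.pi * Complex.I / m) with hω_def
      obtain ⟨n', hn'⟩ : ∃ n', m = 2 * n' := by rcases heven with ⟨c, hc⟩; exact ⟨c, by omega⟩
      have hn'1 : 1 ≤ n' := by omega
      have hmdiv : m / 2 - 1 = n' - 1 := by omega
      have hω0 : ∀ r : ℕ, ω ^ r ≠ 0 := fun r => pow_ne_zero r (hω.ne_zero hm0)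
      have hzpow : ∀ r : ℕ, ω ^ (-(r : ℤ)) = (ω ^ r)⁻¹ := by
        intro r; rw [zpow_neg, zpow_natCast]
      have hzpow' : ∀ r : ℕ, ω ^ ((r : ℤ)) = ω ^ r := fun r => zpow_natCast ω r
      constructor
      · -- set equality
        ext z
        simp only [Finset.coe_insert, Set.mem_insert_iff, Finset.coe_image, Set.mem_image,
          Finset.mem_coe, Finset.mem_Icc, Set.mem_setOf_eq, hmdiv, hzpow, hzpow']
        constructor
        · rintro (rfl | ⟨r, ⟨hr1, hr2⟩, rfl⟩)
          · refine ⟨DihedralGroup.sr 0, ?_, ?_⟩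
            · rw [DihedralGroup.one_def]; intro h; cases h
            · rw [hchar_sr, hε_sr]; ring
          · obtain ⟨a, _, ha⟩ := hu_prim.eq_pow_of_pow_eq_one hω.pow_eq_one
            have hui : u ^ (((a * r : ℕ) : ZMod m)).val = ω ^ r := by
              rw [ZMod.val_natCast, hpow_mod, pow_mul, ha]
            refine ⟨DihedralGroup.r ((a * r : ℕ) : ZMod m), ?_, ?_⟩
            · intro hcon
              rw [DihedralGroup.one_def] at hcon
              have hiz : ((a * r : ℕ) : ZMod m) = 0 := DihedralGroup.r.inj hcon
              rw [hiz] at hui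
              have hbad : ω ^ r = 1 := by rw [← hui]; simp [ZMod.val_zero]
              exact hω.pow_ne_one_of_pos_of_lt (by omega) (by omega) hbad
            · rw [hchar_r, hui, hε_r]
              ring
        · rintro ⟨g, hg1, rfl⟩
          cases g with
          | sr j =>
            left
            rw [hchar_sr, hε_sr]; ring
          | r i =>
            have hi0 : i ≠ 0 := by
              intro hcon; apply hg1; rw [hcon, DihedralGroup.one_def]
            have hx1 : 1 ≤ i.val := Nat.pos_of_ne_zero (fun hcc => hi0 (by
              rwa [ZMod.val_eq_zero] at hcc))
            have hx2 : i.val < m := ZMod.val_lt i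
            obtain ⟨c, hclt, hc⟩ := hω.eq_pow_of_pow_eq_one
              (show (u ^ i.val) ^ m = 1 by rw [← pow_mul, mul_comm, pow_mul, hum.1, one_pow])
            have hc0 : c ≠ 0 := by
              intro hcon
              rw [hcon, pow_zero] at hc
              have hdvd := hu_prim.dvd_of_pow_eq_one i.val hc.symm
              have := Nat.le_of_dvd (by omega) hdvd
              omega
            have hval : V.character (DihedralGroup.r i) + ((ε (DihedralGroup.r i) : ℂˣ) : ℂ)
                = 1 + ω ^ c + (ω ^ c)⁻¹ := by
              rw [hchar_r, hε_r, hc]; ring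
            rcases lt_trichotomy c n' with hcn | hcn | hcn
            · right
              exact ⟨c, ⟨by omega, by omega⟩, by rw [hval]⟩
            · left
              have hωn : ω ^ n' = -1 := Aux14.pow_half hn' hn'1 hω
              rw [hval, hcn, hωn]
              norm_num
            · right
              refine ⟨m - c, ⟨by omega, by omega⟩, ?_⟩
              have hinv2 : ω ^ (m - c) = (ω ^ c)⁻¹ := by
                refine eq_inv_of_mul_eq_one_left ?_
                rw [← pow_add, show m - c + c = m from by omega]
                exact hω.pow_eq_one
              rw [hval, hinv2, inv_inv]
              ring
      · -- product formula
        have hχ1 : V.character 1 + ((ε 1 : ℂˣ) : ℂ) = 3 := by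
          rw [hdeg, map_one, Units.val_one]; norm_num
        have hnotmem : (-1 : ℂ) ∉ (Finset.Icc 1 (m / 2 - 1)).image
            (fun r : ℕ => 1 + ω ^ (r : ℤ) + ω ^ (-(r : ℤ))) := by
          rw [Finset.mem_image]
          rintro ⟨r, hr, hfr⟩
          rw [Finset.mem_Icc, hmdiv] at hr
          rw [hzpow, hzpow'] at hfr
          have hz : ω ^ r * (ω ^ r)⁻¹ = 1 := mul_inv_cancel₀ (hω0 r)
          have h212 : ω ^ r + (ω ^ r)⁻¹ + 2 = 0 := by linear_combination hfr
          have hsq2 : (ω ^ r + 1) ^ 2 = 0 := by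
            linear_combination ω ^ r * h212 - hz
          have hωr : ω ^ r = -1 := by
            have hz2 := pow_eq_zero_iff (n := 2) (by norm_num) |>.mp hsq2
            linear_combination hz2
          have h2r : ω ^ (2 * r) = 1 := by
            rw [two_mul, pow_add, hωr]; norm_num
          have hdvd := hω.dvd_of_pow_eq_one _ h2r
          have := Nat.le_of_dvd (by omega) hdvd
          omega
        have hinj2 : ∀ x ∈ Finset.Icc 1 (m / 2 - 1), ∀ y ∈ Finset.Icc 1 (m / 2 - 1),
            (fun r : ℕ => 1 + ω ^ (r : ℤ) + ω ^ (-(r : ℤ))) x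
              = (fun r : ℕ => 1 + ω ^ (r : ℤ) + ω ^ (-(r : ℤ))) y → x = y := by
          intro x hx y hy hxy
          rw [Finset.mem_Icc, hmdiv] at hx hy
          simp only [hzpow, hzpow'] at hxy
          have hzx : ω ^ x * (ω ^ x)⁻¹ = 1 := mul_inv_cancel₀ (hω0 x)
          have hzy : ω ^ y * (ω ^ y)⁻¹ = 1 := mul_inv_cancel₀ (hω0 y)
          have hfac : (ω ^ x - ω ^ y) * (ω ^ x * ω ^ y - 1) = 0 := by
            linear_combination (ω ^ x * ω ^ y) * hxy - (ω ^ y) * hzx + (ω ^ x) * hzy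
          rcases mul_eq_zero.mp hfac with h4 | h4
          · exact hω.pow_inj (by omega) (by omega) (by linear_combination h4)
          · exfalso
            have h5 : ω ^ (x + y) = 1 := by rw [pow_add]; linear_combination h4
            have hdvd := hω.dvd_of_pow_eq_one _ h5
            have := Nat.le_of_dvd (by omega) hdvd
            omega
        rw [Finset.prod_insert hnotmem, Finset.prod_image hinj2]
        simp only [hχ1]
        rw [DihedralGroup.card, hmdiv]
        have hprod := Aux14.prod_target hn' hn'1 hω
        have hstep : ∏ r ∈ Finset.Icc 1 (n' - 1), ((3 : ℂ) - (1 + ω ^ (r : ℤ) + ω ^ (-(r : ℤ))))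
            = ∏ r ∈ Finset.Icc 1 (n' - 1), (2 - ω ^ r - (ω ^ r)⁻¹) := by
          refine Finset.prod_congr rfl fun r _ => ?_
          rw [hzpow, hzpow']; ring
        rw [hstep, hprod]
        rw [hn']
        push_cast
        ring
end
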